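/- arXiv:1406.6576 — 8 statements merged into one kernel-verified Lean document; each statement's English description precedes it below -/
import Mathlib

section
/- Let I be an independent set of a tree T such that all tokens of I are (T,I)-movable, and let v ∉ I be a vertex. Then there is at most one neighbor w ∈ I ∩ N(v) such that the token on w is (T_w^v, I ∩ T_w^v)-rigid. -/
/-- `I` is an independent set of `G`. -/
def IndepSet {V : Type*} (G : SimpleGraph V) (I : Set V) : Prop :=
  ∀ ⦃u⦄, u ∈ I → ∀ ⦃v⦄, v ∈ I → ¬ G.Adj u v

/-- `B` is obtained from `A` by sliding one token along an edge. -/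
def Slide {V : Type*} (G : SimpleGraph V) (A B : Set V) : Prop :=
  ∃ u v, G.Adj u v ∧ A \ B = {u} ∧ B \ A = {v}

/-- One step of reconfiguration: a slide whose result is independent. -/
def Step {V : Type*} (G : SimpleGraph V) (A B : Set V) : Prop :=
  IndepSet G B ∧ Slide G A B

/-- `I` is reconfigurable to `J` by token sliding. -/
def Reconf {V : Type*} (G : SimpleGraph V) : Set V → Set V → Prop :=
  Relation.ReflTransGen (Step G)

/-- One reconfiguration step restricted to the induced subgraph on `S`. -/
def StepOn {V : Type*} (G : SimpleGraph V) (S : Set V) (A B : Set V) : Prop :=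
  B ⊆ S ∧ IndepSet G B ∧ Slide G A B

/-- Reconfigurability within the induced subgraph on `S`. -/
def ReconfOn {V : Type*} (G : SimpleGraph V) (S : Set V) : Set V → Set V → Prop :=
  Relation.ReflTransGen (StepOn G S)

/-- The token on `u` is `(G, I)`-rigid. -/
def Rigid {V : Type*} (G : SimpleGraph V) (I : Set V) (u : V) : Prop :=
  ∀ J, Reconf G I J → u ∈ J

/-- The token on `u` is rigid for the subgraph induced on `S`, starting from `I ∩ S`. -/
def RigidOn {V : Type*} (G : SimpleGraph V) (S I : Set V) (u : V) : Prop :=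
  ∀ J, ReconfOn G S (I ∩ S) J → u ∈ J

/-- The set `R(I)` of vertices carrying `(G, I)`-rigid tokens. -/
def RigidSet {V : Type*} (G : SimpleGraph V) (I : Set V) : Set V :=
  {u ∈ I | Rigid G I u}

/-- For an edge `{u, v}` of a tree `G`, `SubtreeSide G u v` is the vertex set of the
subtree `T_v^u`: the component of `v` after removing the edge, i.e. vertices strictly
closer to `v` than to `u`. -/
def SubtreeSide {V : Type*} (G : SimpleGraph V) (u v : V) : Set V :=
  {x | G.dist x v < G.dist x u}

/-- The closed neighborhood `N[R]` of a vertex subset `R`. -/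
def ClosedNbhd {V : Type*} (G : SimpleGraph V) (R : Set V) : Set V :=
  R ∪ {x | ∃ r ∈ R, G.Adj r x}

/-!
Suppose two distinct neighbours `w₁, w₂ ∈ I` of `v` were rigid in their subtrees `T_{w₁}^v`,
`T_{w₂}^v`. The only edge of the tree leaving `T_w^v` is `wv`, so along any slide sequence in `T`
the part of the configuration inside `T_w^v` is reached by slides inside `T_w^v`, as long as no
token crosses `wv`. No token crosses: the token on `w` cannot slide onto `v` while the other
rigid neighbour is occupied, and nothing can slide onto `w` because `w` stays occupied. By
induction on the slide sequence both tokens stay put, so `w₁` is `(T, I)`-rigid, contradicting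
movability.
-/

namespace SimpleGraph

variable {V : Type*} {G : SimpleGraph V}

lemma Walk.dist_lt_of_mem_support {a b c : V} (p : G.Walk a b) (hp : p.length = G.dist a b)
    (hc : c ∈ p.support) (hcb : c ≠ b) : G.dist a c < G.dist a b := by
  classical
  calc G.dist a c ≤ (p.takeUntil c hc).length := dist_le _
    _ < p.length := Walk.length_takeUntil_lt_length hc hcb
    _ = G.dist a b := hp

lemma IsTree.eq_of_adj_of_mem_subtreeSide_of_notMem (hT : G.IsTree) {v w u x : V}
    (hvw : G.Adj v w) (hux : G.Adj u x) (hu : u ∈ SubtreeSide G v w)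
    (hx : x ∉ SubtreeSide G v w) : u = w ∧ x = v := by
  obtain ⟨p, hp⟩ := hT.connected.exists_walk_length_eq_dist u w
  obtain ⟨q, hq⟩ := hT.connected.exists_walk_length_eq_dist x v
  have hvp : v ∉ p.support := fun hv => lt_asymm hu (p.dist_lt_of_mem_support hp hv hvw.ne)
  have hwq : w ∉ q.support := fun hw => hx (q.dist_lt_of_mem_support hq hw hvw.ne.symm)
  -- the walk `v ⋯ x u ⋯ w` must use the bridge `vw`, and only `xu` can be it
  have hbridge := isBridge_iff_forall_walk_mem_edges.mp
    (isAcyclic_iff_forall_adj_isBridge.mp hT.isAcyclic hvw) (q.reverse.append (.cons hux.symm p))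
  simp only [Walk.edges_append, Walk.edges_reverse, Walk.edges_cons, List.mem_append,
    List.mem_reverse, List.mem_cons] at hbridge
  rcases hbridge with hq' | hux' | hp'
  · exact absurd (q.snd_mem_support_of_mem_edges hq') hwq
  · rcases Sym2.eq_iff.mp hux' with ⟨hvx, hwu⟩ | ⟨hvu, -⟩
    · exact ⟨hwu.symm, hvx.symm⟩
    · subst hvu
      exact absurd hu (by simp [SubtreeSide])
  · exact absurd (p.fst_mem_support_of_mem_edges hp') hvp

end SimpleGraph

namespace Set

variable {α : Type*} {S A B : Set α} {x y : α}

lemma mem_of_sdiff_eq_singleton (hBA : B \ A = {x}) (hy : y ∈ B) (hyx : y ≠ x) :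
    y ∈ A := by
  by_contra hyA
  exact hyx ((Set.ext_iff.mp hBA y).mp ⟨hy, hyA⟩)

lemma inter_subset_of_sdiff_eq_singleton (hBA : B \ A = {x}) (hx : x ∉ S) :
    B ∩ S ⊆ A ∩ S :=
  fun y ⟨hyB, hyS⟩ => ⟨mem_of_sdiff_eq_singleton hBA hyB (by rintro rfl; exact hx hyS), hyS⟩

end Set

section Restriction

variable {V : Type*} {G : SimpleGraph V} {S A B : Set V} {u x : V}

lemma stepOn_inter_of_mem (hB : IndepSet G B) (hux : G.Adj u x) (hAB : A \ B = {u})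
    (hBA : B \ A = {x}) (hu : u ∈ S) (hx : x ∈ S) : StepOn G S (A ∩ S) (B ∩ S) :=
  ⟨Set.inter_subset_right, fun _ ha _ hb => hB ha.1 hb.1, u, x, hux,
    by rw [← Set.inter_sdiff_distrib_right, hAB, Set.singleton_inter_of_mem hu],
    by rw [← Set.inter_sdiff_distrib_right, hBA, Set.singleton_inter_of_mem hx]⟩

variable {v w w' : V} {I J K : Set V}

lemma reconfOn_subtreeSide_of_step (hT : G.IsTree) (hvw : G.Adj v w) (hvw' : G.Adj v w')
    (hne : w' ≠ w) (hrig : RigidOn G (SubtreeSide G v w) I w) (hw'J : w' ∈ J)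
    (hJ : ReconfOn G (SubtreeSide G v w) (I ∩ SubtreeSide G v w) (J ∩ SubtreeSide G v w))
    (hJK : Step G J K) :
    ReconfOn G (SubtreeSide G v w) (I ∩ SubtreeSide G v w) (K ∩ SubtreeSide G v w) := by
  obtain ⟨hK, u, x, hux, hJK, hKJ⟩ := hJK
  have hxK : x ∈ K \ J := (Set.ext_iff.mp hKJ x).mpr rfl
  by_cases hu : u ∈ SubtreeSide G v w <;> by_cases hx : x ∈ SubtreeSide G v w
  · exact hJ.tail (stepOn_inter_of_mem hK hux hJK hKJ hu hx)
  · obtain ⟨rfl, rfl⟩ := hT.eq_of_adj_of_mem_subtreeSide_of_notMem hvw hux hu hx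
    exact absurd hvw' (hK hxK.1 (Set.mem_of_sdiff_eq_singleton hJK hw'J hne))
  · obtain ⟨rfl, rfl⟩ := hT.eq_of_adj_of_mem_subtreeSide_of_notMem hvw hux.symm hx hu
    exact absurd (hrig _ hJ).1 hxK.2
  · rwa [(Set.inter_subset_of_sdiff_eq_singleton hKJ hx).antisymm
      (Set.inter_subset_of_sdiff_eq_singleton hJK hu)]

lemma reconfOn_subtreeSides_of_reconf (hT : G.IsTree) (h₁ : G.Adj v w) (h₂ : G.Adj v w')
    (hne : w ≠ w') (hrig₁ : RigidOn G (SubtreeSide G v w) I w)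
    (hrig₂ : RigidOn G (SubtreeSide G v w') I w') (hJ : Reconf G I J) :
    ReconfOn G (SubtreeSide G v w) (I ∩ SubtreeSide G v w) (J ∩ SubtreeSide G v w) ∧
      ReconfOn G (SubtreeSide G v w') (I ∩ SubtreeSide G v w') (J ∩ SubtreeSide G v w') := by
  induction hJ with
  | refl => exact ⟨.refl, .refl⟩
  | tail _ hstep ih =>
    exact ⟨reconfOn_subtreeSide_of_step hT h₁ h₂ hne.symm hrig₁ (hrig₂ _ ih.2).1 ih.1 hstep,
      reconfOn_subtreeSide_of_step hT h₂ h₁ hne hrig₂ (hrig₁ _ ih.1).1 ih.2 hstep⟩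

end Restriction

theorem atMostOne_rigid_neighbor_general {V : Type*} (G : SimpleGraph V)
    (hT : G.IsTree) (I : Set V)
    (hmov : ∀ u ∈ I, ¬ Rigid G I u) (v : V) :
    {w : V | w ∈ I ∧ G.Adj v w ∧ RigidOn G (SubtreeSide G v w) I w}.Subsingleton := by
  rintro w₁ ⟨hw₁I, h₁, hrig₁⟩ w₂ ⟨-, h₂, hrig₂⟩
  by_contra hne
  exact hmov w₁ hw₁I fun J hJ =>
    (hrig₁ _ (reconfOn_subtreeSides_of_reconf hT h₁ h₂ hne hrig₁ hrig₂ hJ).1).1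

theorem atMostOne_rigid_neighbor {V : Type*} [Fintype V] (G : SimpleGraph V)
    (hT : G.IsTree) (I : Set V) (hI : IndepSet G I)
    (hmov : ∀ u ∈ I, ¬ Rigid G I u) (v : V) (hv : v ∉ I) :
    {w : V | w ∈ I ∧ G.Adj v w ∧ RigidOn G (SubtreeSide G v w) I w}.Subsingleton :=
  atMostOne_rigid_neighbor_general G hT I hmov v
end

section
/- Let I be an independent set of a tree T and suppose the token on x ∈ I is (T,I)-movable. Then for every vertex u ∈ I \ {x}, the token on u is (T,I)-rigid if and only if it is (T, I \ {x})-rigid. -/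
/-!
Reconfiguration is considered inside a vertex set `S`, so that one can induct on `S`.
The token on `x` can be deleted from any sequence starting at `I`, which gives one direction.
Conversely, suppose `u` is rigid for `I` but can move for `I \ {x}`. Its first move goes to a
neighbour `v`, and just before it every other neighbour `w` of `v` is free. As `u` stays put until
then, `v` is never occupied, so the sequence restricts to each subtree `T_w^v` hanging off `v`
and shows that `w` is movable there for `I \ {x}`. The same restriction, applied to a sequence
moving `x` (during which the rigid `u` also stays put), shows that `x` is movable in `T_w^v` for
`I`; by induction `w` is then movable there for `I` too. Running these subtree sequences one
after another frees every neighbour of `v` except `u`, which can then slide to `v`.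
-/

namespace SimpleGraph

variable {V : Type*} {G : SimpleGraph V}

theorem notMem_subtreeSide_left (v w : V) : v ∉ SubtreeSide G v w := by
  simp [SubtreeSide]

theorem mem_subtreeSide_self {v w : V} (h : G.Adj v w) : w ∈ SubtreeSide G v w := by
  simp [SubtreeSide, dist_eq_one_iff_adj.2 h.symm]

theorem Walk.dist_le_length_of_mem_support {u v w : V} (p : G.Walk u v) (hw : w ∈ p.support) :
    G.dist u w ≤ p.length := by
  classical
  exact (dist_le _).trans (p.length_takeUntil_le_length hw)

theorem IsTree.eq_of_adj_of_mem_subtreeSide (hT : G.IsTree) {v w y z : V} (hvw : G.Adj v w)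
    (hyz : G.Adj y z) (hy : y ∈ SubtreeSide G v w) (hz : z ∉ SubtreeSide G v w) :
    y = w ∧ z = v := by
  simp only [SubtreeSide, Set.mem_ofPred_eq, not_lt] at hy hz
  have hyd := hT.dist_eq_dist_add_one_of_adj y hvw
  have hzd := hT.dist_eq_dist_add_one_of_adj z hvw
  have hzw : G.dist z w ≤ G.dist z y + G.dist y w := hT.connected.dist_triangle
  have hyv : G.dist y v ≤ G.dist y z + G.dist z v := hT.connected.dist_triangle
  have hyz₁ : G.dist y z = 1 := dist_eq_one_iff_adj.2 hyz
  have hzy₁ : G.dist z y = 1 := dist_eq_one_iff_adj.2 hyz.symm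
  obtain ⟨Q, -, hQ⟩ := hT.connected.exists_path_of_dist z v
  obtain ⟨P, -, hP⟩ := hT.connected.exists_path_of_dist y w
  -- `y, z, …, v` and `y, …, w, v` both have length `d(y, v)`, so they are the same path.
  have hQ' : (Walk.cons hyz Q).IsPath := Walk.isPath_of_length_eq_dist _ (by simp; omega)
  have hP' : (P.concat hvw.symm).IsPath := Walk.isPath_of_length_eq_dist _ (by simp; omega)
  have hwv : s(w, v) ∈ (Walk.cons hyz Q).edges := by
    rw [(hT.existsUnique_path y v).unique hQ' hP', Walk.edges_concat]
    simp
  rcases List.mem_cons.1 hwv with h | h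
  · rcases Sym2.eq_iff.1 h with ⟨rfl, rfl⟩ | ⟨rfl, rfl⟩
    · exact ⟨rfl, rfl⟩
    · simp at hy
  · have := Q.dist_le_length_of_mem_support (Q.fst_mem_support_of_mem_edges h)
    omega

theorem IsTree.disjoint_subtreeSide (hT : G.IsTree) {v w₁ w₂ : V} (h₁ : G.Adj v w₁)
    (h₂ : G.Adj v w₂) (hne : w₁ ≠ w₂) : Disjoint (SubtreeSide G v w₁) (SubtreeSide G v w₂) := by
  refine Set.disjoint_left.2 fun z hz₁ hz₂ => hne ?_
  simp only [SubtreeSide, Set.mem_ofPred_eq] at hz₁ hz₂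
  have hd₁ := hT.dist_eq_dist_add_one_of_adj z h₁
  have hd₂ := hT.dist_eq_dist_add_one_of_adj z h₂
  obtain ⟨P₁, -, hP₁⟩ := hT.connected.exists_path_of_dist z w₁
  obtain ⟨P₂, -, hP₂⟩ := hT.connected.exists_path_of_dist z w₂
  have hP₁' : (P₁.concat h₁.symm).IsPath := Walk.isPath_of_length_eq_dist _ (by simp; omega)
  have hP₂' : (P₂.concat h₂.symm).IsPath := Walk.isPath_of_length_eq_dist _ (by simp; omega)
  exact (Walk.concat_inj ((hT.existsUnique_path z v).unique hP₁' hP₂')).1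

end SimpleGraph

open SimpleGraph

theorem Relation.ReflTransGen.exists_step_leaving {α : Type*} {r : α → α → Prop} {p : α → Prop}
    {a b : α} (h : Relation.ReflTransGen r a b) (ha : p a) (hb : ¬p b) :
    ∃ c d, Relation.ReflTransGen (fun x y => r x y ∧ p y) a c ∧ p c ∧ r c d ∧ ¬p d := by
  induction h using Relation.ReflTransGen.head_induction_on with
  | refl => exact absurd ha hb
  | @head a c hac _ ih =>
    by_cases hc : p c
    · obtain ⟨c', d, hcc', hc', hc'd, hd⟩ := ih hc
      exact ⟨c', d, .head ⟨hac, hc⟩ hcc', hc', hc'd, hd⟩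
    · exact ⟨a, c, .refl, ha, hac, hc⟩

section Reconfiguration

variable {V : Type*} {G : SimpleGraph V}

theorem IndepSet.mono {A B : Set V} (hB : IndepSet G B) (h : A ⊆ B) : IndepSet G A :=
  fun _ ha _ hb => hB (h ha) (h hb)

theorem IndepSet.union {A B : Set V} (hA : IndepSet G A) (hB : IndepSet G B)
    (hAB : ∀ a ∈ A, ∀ b ∈ B, ¬G.Adj a b) : IndepSet G (A ∪ B) := by
  rintro y (hy | hy) z (hz | hz) hyz
  exacts [hA hy hz hyz, hAB y hy z hz hyz, hAB z hz y hy hyz.symm, hB hy hz hyz]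

section Slide

variable {A B : Set V} {a b : V}

theorem eq_of_sdiff_eq_singleton (h : A \ B = {a}) {z : V} (hzA : z ∈ A) (hzB : z ∉ B) : z = a := by
  rw [← Set.mem_singleton_iff, ← h]
  exact ⟨hzA, hzB⟩

theorem slide_inter_of_mem (hab : G.Adj a b) (hA : A \ B = {a}) (hB : B \ A = {b}) {T : Set V}
    (ha : a ∈ T) (hb : b ∈ T) : Slide G (A ∩ T) (B ∩ T) :=
  ⟨a, b, hab, by rw [← Set.inter_sdiff_distrib_right, hA, Set.singleton_inter_of_mem ha],
    by rw [← Set.inter_sdiff_distrib_right, hB, Set.singleton_inter_of_mem hb]⟩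

theorem inter_eq_inter_of_notMem (hA : A \ B = {a}) (hB : B \ A = {b}) {T : Set V}
    (ha : a ∉ T) (hb : b ∉ T) : A ∩ T = B ∩ T := by
  apply Set.Subset.antisymm <;> rw [← Set.sdiff_eq_empty, ← Set.inter_sdiff_distrib_right]
  · rwa [hA, Set.singleton_inter_eq_empty]
  · rwa [hB, Set.singleton_inter_eq_empty]

theorem slide_union_left_of_notMem (hab : G.Adj a b) (hA : A \ B = {a}) (hB : B \ A = {b})
    {O : Set V} (ha : a ∉ O) (hb : b ∉ O) : Slide G (O ∪ A) (O ∪ B) := by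
  refine ⟨a, b, hab, ?_, ?_⟩ <;> ext z <;>
    simp only [Set.ext_iff, Set.mem_sdiff, Set.mem_union, Set.mem_singleton_iff] at hA hB ⊢ <;>
    grind

theorem slide_diff_singleton (hab : G.Adj a b) (hA : A \ B = {a}) (hB : B \ A = {b})
    {q : V} (ha : q ≠ a) (hb : q ≠ b) : Slide G (A \ {q}) (B \ {q}) := by
  refine ⟨a, b, hab, ?_, ?_⟩ <;> ext z <;>
    simp only [Set.ext_iff, Set.mem_sdiff, Set.mem_singleton_iff] at hA hB ⊢ <;> grind

theorem diff_singleton_eq_of_slide (hA : A \ B = {a}) (hB : B \ A = {b}) : B \ {b} = A \ {a} := by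
  ext z
  simp only [Set.ext_iff, Set.mem_sdiff, Set.mem_singleton_iff] at hA hB ⊢
  grind

end Slide

theorem StepOn.sdiff_singleton {S A B : Set V} {u v : V} (h : StepOn G S A B) (hu : u ∈ B)
    (huv : G.Adj u v) : StepOn G (S \ {v}) A B :=
  ⟨fun z hz => ⟨h.1 hz, by rintro rfl; exact h.2.1 hu hz huv⟩, h.2⟩

theorem stepOn_insert_diff_singleton {S D : Set V} {u v : V} (huv : G.Adj u v) (hu : u ∈ D)
    (hv : v ∉ D) (hvS : v ∈ S) (hDS : D ⊆ S) (hD : IndepSet G D)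
    (hfree : ∀ z ∈ D, z ≠ u → ¬G.Adj z v) : StepOn G S D (insert v (D \ {u})) := by
  refine ⟨Set.insert_subset hvS (Set.sdiff_subset.trans hDS), ?_, u, v, huv, ?_, ?_⟩
  · rintro y (rfl | ⟨hy, hyu⟩) z (rfl | ⟨hz, hzu⟩) hyz
    exacts [G.loopless.irrefl _ hyz, hfree z hz hzu hyz.symm, hfree y hy hyu hyz, hD hy hz hyz]
  all_goals
    ext z
    simp only [Set.mem_sdiff, Set.mem_insert_iff, Set.mem_singleton_iff]
    grind [huv.ne]

namespace ReconfOn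

variable {S A B : Set V}

theorem indepSet (h : ReconfOn G S A B) (hA : IndepSet G A) : IndepSet G B := by
  induction h with
  | refl => exact hA
  | tail _ hstep _ => exact hstep.2.1

theorem subset_union (h : ReconfOn G S A B) : B ⊆ A ∪ S := by
  induction h with
  | refl => exact Set.subset_union_left
  | tail _ hstep _ => exact hstep.1.trans Set.subset_union_right

theorem subset (h : ReconfOn G S A B) (hA : A ⊆ S) : B ⊆ S :=
  h.subset_union.trans (Set.union_subset hA le_rfl)

/-- `q` is where the token that started on `p` ends up. -/
theorem exists_diff_singleton (h : ReconfOn G S A B) {p : V} (hp : p ∈ A) :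
    ∃ q ∈ B, ReconfOn G S (A \ {p}) (B \ {q}) := by
  induction h with
  | refl => exact ⟨p, hp, .refl⟩
  | @tail P Q _ hstep ih =>
    obtain ⟨q, hqP, hq⟩ := ih
    obtain ⟨hQS, hQ, a, b, hab, hPQ, hQP⟩ := hstep
    have hb : b ∈ Q \ P := hQP ▸ rfl
    by_cases hqa : q = a
    · subst hqa
      exact ⟨b, hb.1, diff_singleton_eq_of_slide hPQ hQP ▸ hq⟩
    · have hqQ : q ∈ Q := by
        by_contra hqQ
        exact hqa (eq_of_sdiff_eq_singleton hPQ hqP hqQ)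
      exact ⟨q, hqQ, hq.tail ⟨Set.sdiff_subset.trans hQS, hQ.mono Set.sdiff_subset,
        slide_diff_singleton hab hPQ hQP hqa (by rintro rfl; exact hb.2 hqP)⟩⟩

theorem inter {T : Set V} {v : V} (h : ReconfOn G S A B) (hvA : v ∉ A) (hvS : v ∉ S)
    (hcross : ∀ ⦃a b⦄, G.Adj a b → a ∈ T → b ∉ T → b = v) :
    ReconfOn G (S ∩ T) (A ∩ T) (B ∩ T) := by
  induction h with
  | refl => exact .refl
  | @tail P Q hAP hstep ih =>
    obtain ⟨hQS, hQ, a, b, hab, hPQ, hQP⟩ := hstep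
    have ha : a ∈ P \ Q := hPQ ▸ rfl
    have hb : b ∈ Q \ P := hQP ▸ rfl
    have hav : a ≠ v := by
      rintro rfl
      rcases ReconfOn.subset_union hAP ha.1 with h | h
      exacts [hvA h, hvS h]
    have hbv : b ≠ v := by rintro rfl; exact hvS (hQS hb.1)
    by_cases haT : a ∈ T <;> by_cases hbT : b ∈ T
    · exact ih.tail ⟨Set.inter_subset_inter_left T hQS, hQ.mono Set.inter_subset_left,
        slide_inter_of_mem hab hPQ hQP haT hbT⟩
    · exact absurd (hcross hab haT hbT) hbv
    · exact absurd (hcross hab.symm hbT haT) hav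
    · rwa [← inter_eq_inter_of_notMem hPQ hQP haT hbT]

theorem union_left {T O P Q : Set V} (h : ReconfOn G T P Q) (hPT : P ⊆ T) (hTS : T ⊆ S)
    (hO : IndepSet G O) (hOS : O ⊆ S) (hOT : Disjoint O T)
    (hOT_adj : ∀ z ∈ O, ∀ y ∈ T, ¬G.Adj z y) : ReconfOn G S (O ∪ P) (O ∪ Q) := by
  induction h with
  | refl => exact .refl
  | @tail P' Q' hPP' hstep ih =>
    obtain ⟨hQ'T, hQ', a, b, hab, hPQ, hQP⟩ := hstep
    have ha : a ∈ P' \ Q' := hPQ ▸ rfl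
    have hb : b ∈ Q' \ P' := hQP ▸ rfl
    refine ih.tail ⟨Set.union_subset hOS (hQ'T.trans hTS),
      hO.union hQ' fun z hz y hy => hOT_adj z hz y (hQ'T hy),
      slide_union_left_of_notMem hab hPQ hQP
        (Set.disjoint_right.1 hOT (ReconfOn.subset hPP' hPT ha.1))
        (Set.disjoint_right.1 hOT (hQ'T hb.1))⟩

/-- `B` is the configuration just before the first move of `u`, which goes to `v`. -/
theorem exists_first_move {J : Set V} {u : V} (h : ReconfOn G S A J) (hu : u ∈ A) (huJ : u ∉ J) :
    ∃ B v, G.Adj u v ∧ v ∈ S ∧ ReconfOn G (S \ {v}) A B ∧ u ∈ B ∧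
      ∀ z ∈ B, z ≠ u → ¬G.Adj z v := by
  obtain ⟨B, C, hAB, huB, ⟨hCS, hC, a, v, hav, hBC, hCB⟩, huC⟩ :=
    h.exists_step_leaving (p := (u ∈ ·)) hu huJ
  obtain rfl : u = a := eq_of_sdiff_eq_singleton hBC huB huC
  have hv : v ∈ C \ B := hCB ▸ rfl
  refine ⟨B, v, hav, hCS hv.1,
    Relation.ReflTransGen.mono (fun _ _ h => h.1.sdiff_singleton h.2 hav) _ _ hAB, huB,
    fun z hz hzu hzv => hC ?_ hv.1 hzv⟩
  by_contra hzC
  exact hzu (eq_of_sdiff_eq_singleton hBC hz hzC)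

end ReconfOn

end Reconfiguration

section Rigidity

variable {V : Type*} {G : SimpleGraph V}

theorem not_rigidOn_iff {S I : Set V} {u : V} :
    ¬RigidOn G S I u ↔ ∃ J, ReconfOn G S (I ∩ S) J ∧ u ∉ J := by
  simp [RigidOn]

theorem RigidOn.mem {S I : Set V} {u : V} (h : RigidOn G S I u) : u ∈ I ∩ S :=
  h _ .refl

theorem rigidOn_univ {I : Set V} {u : V} : RigidOn G Set.univ I u ↔ Rigid G I u := by
  have hstep : StepOn G Set.univ = Step G := by
    ext A B
    exact ⟨fun h => h.2, fun h => ⟨Set.subset_univ B, h⟩⟩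
  rw [RigidOn, ReconfOn, hstep, Set.inter_univ]
  rfl

/-- Every configuration reached contains `u`, hence avoids its neighbour `v`. -/
theorem RigidOn.reconfOn_sdiff_singleton {S I J : Set V} {u v : V} (hu : RigidOn G S I u)
    (huv : G.Adj u v) (h : ReconfOn G S (I ∩ S) J) : ReconfOn G (S \ {v}) (I ∩ S) J := by
  induction h with
  | refl => exact .refl
  | @tail P Q hP hstep ih => exact ih.tail (hstep.sdiff_singleton (hu Q (hP.tail hstep)) huv)

theorem RigidOn.of_diff_singleton {S I : Set V} {x u : V} (h : RigidOn G S (I \ {x}) u) :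
    RigidOn G S I u := by
  intro J hJ
  rw [RigidOn, Set.sdiff_inter_right_comm] at h
  by_cases hx : x ∈ I ∩ S
  · obtain ⟨q, -, hq⟩ := hJ.exists_diff_singleton hx
    exact (h _ hq).1
  · rw [Set.sdiff_singleton_eq_self hx] at h
    exact h J hJ

theorem not_rigidOn_inter_subtreeSide (hT : G.IsTree) {S I J : Set V} {v w y : V}
    (hvw : G.Adj v w) (hvI : v ∉ I) (h : ReconfOn G (S \ {v}) (I ∩ S) J) (hy : y ∉ J) :
    ¬RigidOn G (S ∩ SubtreeSide G v w) I y := by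
  have h' := h.inter (T := SubtreeSide G v w) (fun hv => hvI hv.1) (fun hv => hv.2 rfl)
    fun a b hab ha hb => (hT.eq_of_adj_of_mem_subtreeSide hvw hab ha hb).2
  rw [Set.sdiff_inter_right_comm,
    Set.sdiff_singleton_eq_self fun hv => notMem_subtreeSide_left v w hv.2, Set.inter_assoc] at h'
  exact fun hr => hy (hr _ h').1

/-- Run the given reconfigurations of the subtrees hanging off `v` one after another. -/
theorem exists_reconfOn_vacate (hT : G.IsTree) {S A W : Set V} {v : V} (hA : IndepSet G A)
    (hAS : A ⊆ S) (hvA : v ∉ A) (hW : W.Finite) (hWv : ∀ w ∈ W, G.Adj v w)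
    (hJ : ∀ w ∈ W, ∃ J, ReconfOn G (S ∩ SubtreeSide G v w) (A ∩ SubtreeSide G v w) J ∧ w ∉ J) :
    ∃ D, ReconfOn G S A D ∧ v ∉ D ∧ (∀ w ∈ W, w ∉ D) ∧
      ∀ w, G.Adj v w → w ∉ W → D ∩ SubtreeSide G v w = A ∩ SubtreeSide G v w := by
  induction W, hW using Set.Finite.induction_on with
  | empty => exact ⟨A, .refl, hvA, by simp, fun _ _ _ => rfl⟩
  | @insert a W haW _ ih =>
    obtain ⟨D, hD, hvD, hWD, hside⟩ :=
      ih (fun w hw => hWv w (.inr hw)) (fun w hw => hJ w (.inr hw))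
    have hva := hWv a (.inl rfl)
    obtain ⟨J, hJa, haJ⟩ := hJ a (.inl rfl)
    have hAa : A ∩ SubtreeSide G v a ⊆ S ∩ SubtreeSide G v a := Set.inter_subset_inter_left _ hAS
    have hJside := hJa.subset hAa
    set O := D \ SubtreeSide G v a
    have hOJ : ReconfOn G S (O ∪ (A ∩ SubtreeSide G v a)) (O ∪ J) :=
      hJa.union_left hAa Set.inter_subset_left ((hD.indepSet hA).mono Set.sdiff_subset)
        (Set.sdiff_subset.trans (hD.subset hAS))
        (Set.disjoint_sdiff_left.mono_right Set.inter_subset_right) fun z hz y hy hzy =>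
          hvD ((hT.eq_of_adj_of_mem_subtreeSide hva hzy.symm hy.2 hz.2).2 ▸ hz.1)
    rw [← hside a hva haW, Set.sdiff_union_inter] at hOJ
    refine ⟨O ∪ J, hD.trans hOJ, ?_, ?_, fun w hvw hw => ?_⟩
    · rintro (h | h)
      exacts [hvD h.1, notMem_subtreeSide_left v a (hJside h).2]
    · rintro w (rfl | hw) (h | h)
      · exact h.2 (mem_subtreeSide_self hva)
      · exact haJ h
      · exact hWD w hw h.1
      · exact Set.disjoint_left.1 (hT.disjoint_subtreeSide (hWv w (.inr hw)) hva
          (by rintro rfl; exact haW hw)) (mem_subtreeSide_self (hWv w (.inr hw))) (hJside h).2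
    · have hwa := Set.disjoint_left.1 (hT.disjoint_subtreeSide hvw hva fun h => hw (.inl h))
      rw [← hside w hvw fun h => hw (.inr h)]
      ext z
      simp only [O, Set.mem_inter_iff, Set.mem_union, Set.mem_sdiff]
      constructor
      · rintro ⟨⟨hzD, -⟩ | hzJ, hz⟩
        exacts [⟨hzD, hz⟩, absurd (hJside hzJ).2 (hwa hz)]
      · rintro ⟨hzD, hz⟩
        exact ⟨.inl ⟨hzD, hwa hz⟩, hz⟩

/-- Vacate the other neighbours of `v`, then slide `u` onto `v`. -/
theorem not_rigidOn_of_forall_not_rigidOn_subtreeSide [Finite V] (hT : G.IsTree) {S I : Set V}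
    {u v : V} (hI : IndepSet G I) (huv : G.Adj u v) (hu : u ∈ I ∩ S) (hvS : v ∈ S)
    (h : ∀ w, G.Adj v w → w ∈ I → w ≠ u → ¬RigidOn G (S ∩ SubtreeSide G v w) I w) :
    ¬RigidOn G S I u := by
  set W := {w | G.Adj v w ∧ w ∈ I ∧ w ≠ u}
  obtain ⟨D, hD, hvD, hWD, hside⟩ := exists_reconfOn_vacate (A := I ∩ S) hT
    (hI.mono Set.inter_subset_left) Set.inter_subset_right (fun hv => hI hu.1 hv.1 huv)
    (Set.toFinite W) (fun w hw => hw.1) fun w hw => by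
      rw [Set.inter_assoc]
      exact not_rigidOn_iff.1 (h w hw.1 hw.2.1 hw.2.2)
  have hmem : ∀ z, G.Adj v z → z ∉ W → z ∈ D → z ∈ I := fun z hvz hzW hzD =>
    ((hside z hvz hzW).le ⟨hzD, mem_subtreeSide_self hvz⟩).1.1
  have huD : u ∈ D :=
    ((hside u huv.symm fun hw => hw.2.2 rfl).ge ⟨hu, mem_subtreeSide_self huv.symm⟩).1
  have hfree : ∀ z ∈ D, z ≠ u → ¬G.Adj z v := fun z hzD hzu hzv => by
    by_cases hzW : z ∈ W
    · exact hWD z hzW hzD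
    · exact hzW ⟨hzv.symm, hmem z hzv.symm hzW hzD, hzu⟩
  rw [not_rigidOn_iff]
  refine ⟨_, hD.tail (stepOn_insert_diff_singleton huv huD hvD hvS
    (hD.subset Set.inter_subset_right) (hD.indepSet (hI.mono Set.inter_subset_left)) hfree), ?_⟩
  rintro (h | h)
  exacts [huv.ne h, h.2 rfl]

theorem RigidOn.diff_singleton [Finite V] (hT : G.IsTree) {I : Set V} (hI : IndepSet G I) {x : V}
    (S : Set V) {u : V} (hx : ¬RigidOn G S I x) (hu : RigidOn G S I u) :
    RigidOn G S (I \ {x}) u := by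
  induction S using WellFoundedLT.induction generalizing u with
  | _ S ih =>
  by_contra hnot
  obtain ⟨J₀, hJ₀, huJ₀⟩ := not_rigidOn_iff.1 hnot
  have huI := hu.mem
  have hux : u ≠ x := by rintro rfl; exact hx hu
  obtain ⟨B, v, huv, hvS, hB, -, hBv⟩ := hJ₀.exists_first_move ⟨⟨huI.1, hux⟩, huI.2⟩ huJ₀
  have hvI : v ∉ I := fun hv => hI huI.1 hv huv
  obtain ⟨J₁, hJ₁, hxJ₁⟩ := not_rigidOn_iff.1 hx
  refine not_rigidOn_of_forall_not_rigidOn_subtreeSide hT hI huv huI hvS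
    (fun w hvw _ hwu hw => ?_) hu
  have hS : S ∩ SubtreeSide G v w < S := (Set.ssubset_iff_of_subset Set.inter_subset_left).2
    ⟨v, hvS, fun hv => notMem_subtreeSide_left v w hv.2⟩
  have hx' := not_rigidOn_inter_subtreeSide hT hvw hvI (hu.reconfOn_sdiff_singleton huv hJ₁) hxJ₁
  exact not_rigidOn_inter_subtreeSide hT hvw (fun hv => hvI hv.1) hB
    (fun hwB => hBv w hwB hwu hvw.symm) (ih _ hS hx' hw)

end Rigidity

theorem rigid_iff_rigid_of_remove_movable_general {V : Type*} [Fintype V] (G : SimpleGraph V)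
    (hT : G.IsTree) (I : Set V) (hI : IndepSet G I) (x : V)
    (hxmov : ¬ Rigid G I x) :
    ∀ u ∈ I \ {x}, (Rigid G I u ↔ Rigid G (I \ {x}) u) := by
  intro u _
  simp only [← rigidOn_univ] at hxmov ⊢
  exact ⟨RigidOn.diff_singleton hT hI _ hxmov, RigidOn.of_diff_singleton⟩

theorem rigid_iff_rigid_of_remove_movable {V : Type*} [Fintype V] (G : SimpleGraph V)
    (hT : G.IsTree) (I : Set V) (hI : IndepSet G I) (x : V) (hx : x ∈ I)
    (hxmov : ¬ Rigid G I x) :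
    ∀ u ∈ I \ {x}, (Rigid G I u ↔ Rigid G (I \ {x}) u) :=
  rigid_iff_rigid_of_remove_movable_general G hT I hI x hxmov
end

section
/- Let I_b and I_r be independent sets of a tree T with R(I_b) = R(I_r), and let F be the forest obtained by deleting N[R(I_b)] from T. Then every token of I_b ∩ F is (F, I_b ∩ F)-movable, and every token of I_r ∩ F is (F, I_r ∩ F)-movable. -/
/-!
Rigid tokens never move, and no token of a reachable independent set is adjacent to one, so every
slide in a reconfiguration sequence of `I` moves a token from outside `N[R(I)]` to outside
`N[R(I)]`. Intersecting the whole sequence with `F = T - N[R(I)]` therefore gives a reconfiguration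
sequence of `I ∩ F` inside `F`. A token of `I ∩ F` is not `(T, I)`-rigid, so some sequence in `T`
removes it, and so does the restricted sequence in `F`.
-/

lemma IndepSet.of_reconf {V : Type*} {G : SimpleGraph V} {I J : Set V} (hI : IndepSet G I)
    (h : Reconf G I J) : IndepSet G J := by
  induction h with
  | refl => exact hI
  | tail _ hstep _ => exact hstep.1

lemma Slide.inter_of_mem {V : Type*} {G : SimpleGraph V} {A B S : Set V} {u v : V}
    (hadj : G.Adj u v) (hAB : A \ B = {u}) (hBA : B \ A = {v}) (hu : u ∈ S) (hv : v ∈ S) :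
    Slide G (A ∩ S) (B ∩ S) :=
  ⟨u, v, hadj, by rw [← Set.inter_sdiff_distrib_right, hAB, Set.singleton_inter_of_mem hu],
    by rw [← Set.inter_sdiff_distrib_right, hBA, Set.singleton_inter_of_mem hv]⟩

lemma notMem_closedNbhd_of_mem_diff {V : Type*} {G : SimpleGraph V} {A B R : Set V} {x : V}
    (hA : IndepSet G A) (hRA : R ⊆ A) (hRB : R ⊆ B) (hx : x ∈ A \ B) :
    x ∉ ClosedNbhd G R := by
  rintro (hxR | ⟨r, hr, hrx⟩)
  · exact hx.2 (hRB hxR)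
  · exact hA (hRA hr) hx.1 hrx

lemma Step.stepOn_inter_compl_closedNbhd {V : Type*} {G : SimpleGraph V} {A B R : Set V}
    (hA : IndepSet G A) (hRA : R ⊆ A) (hRB : R ⊆ B) (h : Step G A B) :
    StepOn G (ClosedNbhd G R)ᶜ (A ∩ (ClosedNbhd G R)ᶜ) (B ∩ (ClosedNbhd G R)ᶜ) := by
  obtain ⟨hB, u, v, hadj, hAB, hBA⟩ := h
  have hu : u ∉ ClosedNbhd G R :=
    notMem_closedNbhd_of_mem_diff hA hRA hRB (hAB ▸ Set.mem_singleton u)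
  have hv : v ∉ ClosedNbhd G R :=
    notMem_closedNbhd_of_mem_diff hB hRB hRA (hBA ▸ Set.mem_singleton v)
  exact ⟨Set.inter_subset_right, fun x hx y hy => hB hx.1 hy.1,
    Slide.inter_of_mem hadj hAB hBA hu hv⟩

lemma Reconf.reconfOn_inter_compl_closedNbhd_rigidSet {V : Type*} {G : SimpleGraph V}
    {I J : Set V} (hI : IndepSet G I) (h : Reconf G I J) :
    ReconfOn G (ClosedNbhd G (RigidSet G I))ᶜ (I ∩ (ClosedNbhd G (RigidSet G I))ᶜ)
      (J ∩ (ClosedNbhd G (RigidSet G I))ᶜ) := by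
  induction h with
  | refl => exact Relation.ReflTransGen.refl
  | @tail B C hIB hBC ih =>
    have hRB : RigidSet G I ⊆ B := fun r hr => hr.2 B hIB
    have hRC : RigidSet G I ⊆ C := fun r hr => hr.2 C (hIB.tail hBC)
    exact ih.tail (hBC.stepOn_inter_compl_closedNbhd (hI.of_reconf hIB) hRB hRC)

lemma not_rigidOn_compl_closedNbhd_rigidSet {V : Type*} {G : SimpleGraph V} {I : Set V}
    (hI : IndepSet G I) {u : V} (hu : u ∈ I ∩ (ClosedNbhd G (RigidSet G I))ᶜ) :
    ¬ RigidOn G (ClosedNbhd G (RigidSet G I))ᶜ I u := by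
  intro hrigidOn
  have hmovable : ¬ Rigid G I u := fun hrigid => hu.2 (Or.inl ⟨hu.1, hrigid⟩)
  obtain ⟨J, hIJ, huJ⟩ : ∃ J, Reconf G I J ∧ u ∉ J := by
    simpa only [Rigid, not_forall, exists_prop] using hmovable
  exact huJ (hrigidOn _ (hIJ.reconfOn_inter_compl_closedNbhd_rigidSet hI)).1

theorem movable_in_forest_general {V : Type*} (G : SimpleGraph V)
    (Ib Ir : Set V) (hIb : IndepSet G Ib) (hIr : IndepSet G Ir)
    (hR : RigidSet G Ib = RigidSet G Ir)
    (S : Set V) (hS : S = (ClosedNbhd G (RigidSet G Ib))ᶜ) :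
    (∀ u ∈ Ib ∩ S, ¬ RigidOn G S Ib u) ∧ (∀ u ∈ Ir ∩ S, ¬ RigidOn G S Ir u) := by
  subst hS
  refine ⟨fun u hu => not_rigidOn_compl_closedNbhd_rigidSet hIb hu, fun u hu => ?_⟩
  rw [hR] at hu ⊢
  exact not_rigidOn_compl_closedNbhd_rigidSet hIr hu

theorem movable_in_forest {V : Type*} [Fintype V] (G : SimpleGraph V)
    (hT : G.IsTree) (Ib Ir : Set V) (hIb : IndepSet G Ib) (hIr : IndepSet G Ir)
    (hR : RigidSet G Ib = RigidSet G Ir)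
    (S : Set V) (hS : S = (ClosedNbhd G (RigidSet G Ib))ᶜ) :
    (∀ u ∈ Ib ∩ S, ¬ RigidOn G S Ib u) ∧ (∀ u ∈ Ir ∩ S, ¬ RigidOn G S Ir u) :=
  movable_in_forest_general G Ib Ir hIb hIr hR S hS
end

section
/- Let I_b and I_r be independent sets of a tree T such that all tokens of I_b are (T,I_b)-movable and all tokens of I_r are (T,I_r)-movable. Then I_b ⇝ I_r under token sliding if and only if |I_b| = |I_r|. -/
/-!
A token on `w` is *locked* behind a neighbour `y` when every other neighbour of `w` is adjacent
to a token locked behind that neighbour. A token is rigid exactly when each of its neighbours is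
adjacent to another token locked behind it: such tokens block one another forever, whereas a
token on `w` that is not locked behind `y` can leave `w` inside its branch, by first evacuating,
recursively in smaller branches, the tokens next to a suitable neighbour `z` of `w`, and then
sliding to `z`. Hence, when all tokens are movable, a token can be brought onto any vertex:
walking a token towards it, the next vertex can always be occupied, as at most one of its
neighbours carries a token locked behind it.

For the induction on the number of tokens, let `v, u, q` start a longest path, so that all
neighbours of `u` other than `q` are leaves. Bring a token onto `v` in both configurations. The
other tokens then lie in the branch behind `uq` and are still movable there (a token rigid there
would be rigid in the whole tree, the token on `v` blocking `u`), so by induction they can be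
reconfigured inside that branch while `v` keeps its token. The argument runs in geodesically
convex vertex sets, as branches of a tree are.
-/

namespace TokenSliding

open SimpleGraph Relation

variable {V : Type*} {G : SimpleGraph V} {A B D F I I' J K R S S' T : Set V}
  {a b c m p q s t u v w w' x y z : V}

lemma IndepSet.union (hA : IndepSet G A) (hB : IndepSet G B) (hAB : ∀ a ∈ A, ∀ b ∈ B, ¬ G.Adj a b) :
    IndepSet G (A ∪ B) := by
  rintro s (hs | hs) t (ht | ht) hst
  · exact hA hs ht hst
  · exact hAB s hs t ht hst
  · exact hAB t ht s hs hst.symm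
  · exact hB hs ht hst

lemma Slide.symm (h : Slide G A B) : Slide G B A := by
  obtain ⟨a, b, hab, hA, hB⟩ := h
  exact ⟨b, a, hab.symm, hB, hA⟩

lemma Slide.ncard_eq [Finite V] (h : Slide G A B) : A.ncard = B.ncard := by
  obtain ⟨a, b, -, hA, hB⟩ := h
  have hA' := Set.ncard_inter_add_ncard_sdiff_eq_ncard A B (Set.toFinite A)
  have hB' := Set.ncard_inter_add_ncard_sdiff_eq_ncard B A (Set.toFinite B)
  rw [hA, Set.ncard_singleton] at hA'
  rw [hB, Set.ncard_singleton, Set.inter_comm] at hB'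
  omega

lemma Slide.union_left (h : Slide G A B) (hA : Disjoint F A) (hB : Disjoint F B) :
    Slide G (F ∪ A) (F ∪ B) := by
  obtain ⟨a, b, hab, hAB, hBA⟩ := h
  refine ⟨a, b, hab, ?_, ?_⟩
  · rw [← Set.sdiff_sdiff, Set.union_sdiff_left, hA.symm.sdiff_eq_left, hAB]
  · rw [← Set.sdiff_sdiff, Set.union_sdiff_left, hB.symm.sdiff_eq_left, hBA]

lemma ReconfOn.indepSet (h : ReconfOn G S I J) (hI : IndepSet G I) : IndepSet G J := by
  induction h with
  | refl => exact hI
  | tail _ hstep _ => exact hstep.2.1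

lemma ReconfOn.subset (h : ReconfOn G S I J) (hIS : I ⊆ S) : J ⊆ S := by
  induction h with
  | refl => exact hIS
  | tail _ hstep _ => exact hstep.1

lemma ReconfOn.ncard_eq [Finite V] (h : ReconfOn G S I J) : I.ncard = J.ncard := by
  induction h with
  | refl => rfl
  | tail _ hstep ih => exact ih.trans (Slide.ncard_eq hstep.2.2)

lemma ReconfOn.symm (h : ReconfOn G S I J) (hI : IndepSet G I) (hIS : I ⊆ S) :
    ReconfOn G S J I := by
  induction h with
  | refl => exact .refl
  | tail hIK hstep ih =>
    exact .head ⟨ReconfOn.subset hIK hIS, ReconfOn.indepSet hIK hI, Slide.symm hstep.2.2⟩ ih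

lemma reconfOn_univ_iff : ReconfOn G Set.univ I J ↔ Reconf G I J := by
  have : StepOn G Set.univ = Step G := by
    funext A B
    exact propext ⟨fun h => h.2, fun h => ⟨Set.subset_univ B, h⟩⟩
  rw [ReconfOn, Reconf, this]

lemma Reconf.ncard_eq [Finite V] (h : Reconf G I J) : I.ncard = J.ncard :=
  ReconfOn.ncard_eq (reconfOn_univ_iff.2 h)

lemma ReconfOn.union_left (h : ReconfOn G D A K) (hAD : A ⊆ D) (hDS : D ⊆ S) (hFS : F ⊆ S)
    (hF : IndepSet G F) (hFD : Disjoint F D) (hadj : ∀ f ∈ F, ∀ d ∈ D, ¬ G.Adj f d) :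
    ReconfOn G S (F ∪ A) (F ∪ K) := by
  induction h with
  | refl => exact .refl
  | @tail X Y hAX hstep ih =>
    obtain ⟨hYD, hY, hXY⟩ := hstep
    refine ih.tail ⟨Set.union_subset hFS (hYD.trans hDS), IndepSet.union hF hY ?_, ?_⟩
    · exact fun f hf y hy => hadj f hf y (hYD hy)
    · exact Slide.union_left hXY (hFD.mono_right (ReconfOn.subset hAX hAD)) (hFD.mono_right hYD)

lemma stepOn_insert_sdiff (hJ : IndepSet G J) (hJS : J ⊆ S) (hpS : p ∈ S) (hpJ : p ∉ J)
    (hmJ : m ∈ J) (hmp : G.Adj m p) (hnbr : ∀ t ∈ J, G.Adj p t → t = m) :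
    StepOn G S J (insert p (J \ {m})) := by
  have hpm : p ≠ m := hmp.ne.symm
  refine ⟨Set.insert_subset hpS (Set.sdiff_subset.trans hJS), ?_, m, p, hmp, ?_, ?_⟩
  · rintro s (rfl | ⟨hs, hsm⟩) t (rfl | ⟨ht, htm⟩) hst
    · exact G.irrefl hst
    · exact htm (hnbr t ht hst)
    · exact hsm (hnbr s hs hst.symm)
    · exact hJ hs ht hst
  · ext t
    simp only [Set.mem_sdiff, Set.mem_insert_iff, Set.mem_singleton_iff]
    constructor
    · tauto
    · rintro rfl; tauto
  · ext t
    simp only [Set.mem_sdiff, Set.mem_insert_iff, Set.mem_singleton_iff]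
    constructor
    · tauto
    · rintro rfl; tauto

lemma exists_adj_dist_add_one_eq (hG : G.Connected) (h : a ≠ x) :
    ∃ c, G.Adj x c ∧ G.dist a c + 1 = G.dist a x := by
  obtain ⟨p, hp⟩ := hG.exists_walk_length_eq_dist x a
  cases p with
  | nil => exact absurd rfl h
  | @cons _ c _ hxc q =>
    have hq := dist_le q
    have htri := hG.dist_triangle (u := x) (v := c) (w := a)
    rw [dist_eq_one_iff_adj.2 hxc] at htri
    rw [Walk.length_cons] at hp
    refine ⟨c, hxc, ?_⟩
    rw [dist_comm, dist_comm (u := a)]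
    omega

lemma eq_of_adj_of_dist_add_one_eq (hT : G.IsTree) {t₁ t₂ : V} (h₁ : G.Adj t₁ s)
    (h₂ : G.Adj t₂ s) (hd₁ : G.dist a t₁ + 1 = G.dist a s) (hd₂ : G.dist a t₂ + 1 = G.dist a s) :
    t₁ = t₂ := by
  obtain ⟨p₁, hp₁⟩ := hT.connected.exists_walk_length_eq_dist a t₁
  obtain ⟨p₂, hp₂⟩ := hT.connected.exists_walk_length_eq_dist a t₂
  have hq₁ := (p₁.concat h₁).isPath_of_length_eq_dist (by rw [Walk.length_concat, hp₁, hd₁])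
  have hq₂ := (p₂.concat h₂).isPath_of_length_eq_dist (by rw [Walk.length_concat, hp₂, hd₂])
  exact (Walk.concat_inj ((hT.existsUnique_path a s).unique hq₁ hq₂)).1

lemma base_notMem_subtreeSide : y ∉ SubtreeSide G y w := by
  simp [SubtreeSide]

lemma self_mem_subtreeSide (hyw : G.Adj y w) : w ∈ SubtreeSide G y w := by
  simp [SubtreeSide, dist_eq_one_iff_adj.2 hyw.symm]

lemma eq_of_adj_of_mem_subtreeSide (hT : G.IsTree) (hpt : G.Adj p t)
    (ht : t ∈ SubtreeSide G p w) : t = w := by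
  have hlt : G.dist t w < G.dist t p := ht
  rw [dist_eq_one_iff_adj.2 hpt.symm, Nat.lt_one_iff] at hlt
  exact hT.connected.dist_eq_zero_iff.1 hlt

lemma mem_subtreeSide_iff (hT : G.IsTree) (hyw : G.Adj y w) :
    x ∈ SubtreeSide G y w ↔ G.dist x w + 1 = G.dist x y := by
  have := hT.dist_eq_dist_add_one_of_adj x hyw
  change G.dist x w < G.dist x y ↔ _
  omega

lemma notMem_subtreeSide_iff (hT : G.IsTree) (hyw : G.Adj y w) :
    x ∉ SubtreeSide G y w ↔ G.dist x y + 1 = G.dist x w := by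
  have := hT.dist_eq_dist_add_one_of_adj x hyw
  change ¬ G.dist x w < G.dist x y ↔ _
  omega

lemma mem_subtreeSide_of_adj (hT : G.IsTree) (hyw : G.Adj y w) (hwz : G.Adj w z)
    (hzy : z ≠ y) : z ∈ SubtreeSide G y w := by
  have := hT.dist_eq_dist_add_one_of_adj z hyw
  have hzw := dist_eq_one_iff_adj.2 hwz.symm
  have hzy' : G.dist z y ≠ 0 := fun h => hzy (hT.connected.dist_eq_zero_iff.1 h)
  rw [mem_subtreeSide_iff hT hyw]
  omega

lemma eq_of_adj_of_mem_subtreeSide_of_notMem (hT : G.IsTree) (hyw : G.Adj y w)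
    (hz : z ∈ SubtreeSide G y w) (hx : x ∉ SubtreeSide G y w) (hzx : G.Adj z x) :
    z = w ∧ x = y := by
  rw [mem_subtreeSide_iff hT hyw, dist_comm (u := z), dist_comm (u := z)] at hz
  rw [notMem_subtreeSide_iff hT hyw, dist_comm (u := x), dist_comm (u := x)] at hx
  have hy := hT.dist_eq_dist_add_one_of_adj y hzx
  have hw := hT.dist_eq_dist_add_one_of_adj w hzx
  by_cases hzw : z = w
  · subst hzw
    refine ⟨rfl, (hT.connected.dist_eq_zero_iff.1 ?_).symm⟩
    simp only [dist_self] at hz hy hw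
    omega
  · exfalso
    obtain ⟨c, hzc, hc⟩ := exists_adj_dist_add_one_eq hT.connected (Ne.symm hzw)
    have htri := hT.connected.dist_triangle (u := y) (v := w) (w := c)
    have hyc := hT.dist_eq_dist_add_one_of_adj y hzc
    rw [dist_eq_one_iff_adj.2 hyw] at htri
    have hcx : c = x := eq_of_adj_of_dist_add_one_eq hT hzc.symm hzx.symm (a := y) (by omega)
      (by omega)
    subst hcx
    omega

lemma dist_lt_of_mem_subtreeSide_of_notMem (hT : G.IsTree) (hyw : G.Adj y w)
    (hx : x ∈ SubtreeSide G y w) (hc : c ∉ SubtreeSide G y w) : G.dist x w < G.dist x c := by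
  induction hd : G.dist x c using Nat.strong_induction_on generalizing c with
  | _ n ih =>
  have hxc : x ≠ c := fun h => hc (h ▸ hx)
  obtain ⟨c₁, hcc₁, hc₁⟩ := exists_adj_dist_add_one_eq hT.connected hxc
  by_cases hc₁y : c₁ ∈ SubtreeSide G y w
  · obtain ⟨rfl, -⟩ := eq_of_adj_of_mem_subtreeSide_of_notMem hT hyw hc₁y hc hcc₁.symm
    omega
  · have := ih _ (by omega) hc₁y rfl
    omega

def GeodesicallyConvex (G : SimpleGraph V) (S : Set V) : Prop :=
  ∀ ⦃x⦄, x ∈ S → ∀ ⦃y⦄, y ∈ S → ∀ ⦃z⦄, G.dist x z + G.dist z y = G.dist x y → z ∈ S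

lemma geodesicallyConvex_univ : GeodesicallyConvex G Set.univ :=
  fun _ _ _ _ _ _ => trivial

lemma GeodesicallyConvex.inter (hS : GeodesicallyConvex G S) (hS' : GeodesicallyConvex G S') :
    GeodesicallyConvex G (S ∩ S') :=
  fun _ hx _ hy _ hz => ⟨hS hx.1 hy.1 hz, hS' hx.2 hy.2 hz⟩

lemma GeodesicallyConvex.mem_of_adj (hS : GeodesicallyConvex G S) (ha : a ∈ S) (hx : x ∈ S)
    (hxc : G.Adj x c) (hc : G.dist a c + 1 = G.dist a x) : c ∈ S :=
  hS hx ha (by rw [dist_eq_one_iff_adj.2 hxc, dist_comm (u := c), dist_comm (u := x)]; omega)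

lemma geodesicallyConvex_subtreeSide (hT : G.IsTree) (hyw : G.Adj y w) :
    GeodesicallyConvex G (SubtreeSide G y w) := by
  intro x₁ hx₁ x₂ hx₂ m hm
  by_contra hmy
  have h₁ := dist_lt_of_mem_subtreeSide_of_notMem hT hyw hx₁ hmy
  have h₂ := dist_lt_of_mem_subtreeSide_of_notMem hT hyw hx₂ hmy
  have htri := hT.connected.dist_triangle (u := x₁) (v := w) (w := x₂)
  rw [dist_comm (u := w)] at htri
  rw [dist_comm (u := m)] at hm
  omega

lemma disjoint_subtreeSide (hT : G.IsTree) (hpw : G.Adj p w) (hpw' : G.Adj p w') (hne : w ≠ w') :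
    Disjoint (SubtreeSide G p w) (SubtreeSide G p w') := by
  refine Set.disjoint_left.2 fun x hx hx' => hne ?_
  rw [mem_subtreeSide_iff hT hpw] at hx
  rw [mem_subtreeSide_iff hT hpw'] at hx'
  exact eq_of_adj_of_dist_add_one_eq hT hpw.symm hpw'.symm hx hx'

lemma subtreeSide_subset_subtreeSide (hT : G.IsTree) (hyw : G.Adj y w) (hwz : G.Adj w z)
    (hzy : z ≠ y) (hzw' : G.Adj z w') (hw' : w' ≠ w) :
    SubtreeSide G z w' ⊆ SubtreeSide G y w := by
  intro x hx
  rw [mem_subtreeSide_iff hT hzw'] at hx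
  rw [mem_subtreeSide_iff hT hyw]
  rcases hT.dist_eq_dist_add_one_of_adj x hwz with hxw | hxz
  · rcases hT.dist_eq_dist_add_one_of_adj x hyw with hxy | hxy
    · exact hxy.symm
    · exact absurd (eq_of_adj_of_dist_add_one_eq hT hyw hwz.symm hxy.symm hxw.symm) hzy.symm
  · exact absurd (eq_of_adj_of_dist_add_one_eq hT hzw'.symm hwz hx hxz.symm) hw'

lemma rigidOn_iff (hIS : I ⊆ S) : RigidOn G S I x ↔ ∀ J, ReconfOn G S I J → x ∈ J := by
  rw [RigidOn, Set.inter_eq_left.2 hIS]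

lemma rigidOn_iff_of_reconfOn (h : ReconfOn G S I J) (hI : IndepSet G I) (hIS : I ⊆ S) :
    RigidOn G S I x ↔ RigidOn G S J x := by
  rw [rigidOn_iff hIS, rigidOn_iff (ReconfOn.subset h hIS)]
  exact ⟨fun hx K hK => hx K (h.trans hK), fun hx K hK => hx K ((ReconfOn.symm h hI hIS).trans hK)⟩

def AllMovable (G : SimpleGraph V) (S I : Set V) : Prop :=
  ∀ x ∈ I, ¬ RigidOn G S I x

lemma allMovable_univ_iff : AllMovable G Set.univ I ↔ ∀ x ∈ I, ¬ Rigid G I x := by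
  simp only [AllMovable, RigidOn, Rigid, Set.inter_univ, reconfOn_univ_iff]

lemma allMovable_of_reconfOn (h : ReconfOn G S I J) (hI : IndepSet G I) (hIS : I ⊆ S)
    (hmov : AllMovable G S I) : AllMovable G S J := by
  intro x _ hx
  rw [← rigidOn_iff_of_reconfOn h hI hIS] at hx
  exact hmov x ((rigidOn_iff hIS).1 hx I .refl) hx

/-- No token of `T` can make the first move: its target would be adjacent to another token
of `T`. -/
lemma ReconfOn.subset_of_blocking (h : ReconfOn G S I J) (hTI : T ⊆ I)
    (hblock : ∀ t ∈ T, ∀ z ∈ S, G.Adj t z → ∃ t' ∈ T, t' ≠ t ∧ G.Adj z t') : T ⊆ J := by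
  induction h with
  | refl => exact hTI
  | @tail X Y _ hstep ih =>
    obtain ⟨hYS, hY, a, b, hab, hXY, hYX⟩ := hstep
    have hbY : b ∈ Y := (hYX.symm ▸ Set.mem_singleton b : b ∈ Y \ X).1
    have hstay : ∀ t ∈ X, t ≠ a → t ∈ Y := fun t ht hta => by
      by_contra htY
      exact hta (hXY ▸ Set.mem_sdiff_of_mem ht htY :)
    intro t ht
    by_cases hta : t = a
    · subst hta
      obtain ⟨t', ht', ht't, hbt'⟩ := hblock t ht b (hYS hbY) hab
      exact absurd hbt' (hY hbY (hstay t' (ih ht') ht't))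
    · exact hstay t (ih ht) hta

def IsLockSet (G : SimpleGraph V) (S I : Set V) (P : Set (V × V)) : Prop :=
  ∀ q ∈ P, q.2 ∈ I ∧ q.2 ∈ S ∧ G.Adj q.1 q.2 ∧
    ∀ z ∈ S, G.Adj q.2 z → z ≠ q.1 → ∃ w', w' ≠ q.2 ∧ (z, w') ∈ P

/-- The token on `w` is locked behind its neighbour `y` if every other neighbour `z ∈ S` of `w`
is adjacent to a token `w' ≠ w` locked behind `z` (`lockedOn_iff`). This recursion is read
coinductively, through sets of pairs `(y, w)` closed under it. -/
def LockedOn (G : SimpleGraph V) (S I : Set V) (y w : V) : Prop :=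
  ∃ P, IsLockSet G S I P ∧ (y, w) ∈ P

lemma lockedOn_iff : LockedOn G S I y w ↔ w ∈ I ∧ w ∈ S ∧ G.Adj y w ∧
    ∀ z ∈ S, G.Adj w z → z ≠ y → ∃ w', w' ≠ w ∧ LockedOn G S I z w' := by
  have unfold : ∀ {y w}, LockedOn G S I y w → w ∈ I ∧ w ∈ S ∧ G.Adj y w ∧
      ∀ z ∈ S, G.Adj w z → z ≠ y → ∃ w', w' ≠ w ∧ LockedOn G S I z w' := by
    rintro y w ⟨P, hP, hyw⟩
    obtain ⟨hw, hwS, hyw', hnext⟩ := hP _ hyw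
    exact ⟨hw, hwS, hyw', fun z hz hwz hzy =>
      (hnext z hz hwz hzy).imp fun w' h => ⟨h.1, P, hP, h.2⟩⟩
  refine ⟨unfold, fun ⟨hw, hwS, hyw, hnext⟩ => ?_⟩
  refine ⟨insert (y, w) {q | LockedOn G S I q.1 q.2}, ?_, Set.mem_insert _ _⟩
  rintro ⟨a, b⟩ hq
  rcases Set.mem_insert_iff.1 hq with hq | hq
  · obtain ⟨rfl, rfl⟩ := Prod.mk.inj hq
    exact ⟨hw, hwS, hyw, fun z hz hwz hzy =>
      (hnext z hz hwz hzy).imp fun w' h => ⟨h.1, Or.inr h.2⟩⟩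
  · obtain ⟨hb, hbS, hab, hnext'⟩ := unfold hq
    exact ⟨hb, hbS, hab, fun z hz hbz hza =>
      (hnext' z hz hbz hza).imp fun w' h => ⟨h.1, Or.inr h.2⟩⟩

lemma LockedOn.mono (h : LockedOn G S' I' y w) (hS : S' ⊆ S) (hI : I' ⊆ I)
    (hbdry : ∀ t ∈ S', ∀ z ∈ S \ S', G.Adj t z → ∃ w', w' ≠ t ∧ LockedOn G S I z w') :
    LockedOn G S I y w := by
  obtain ⟨P, hP, hyw⟩ := h
  refine ⟨P ∪ {q | LockedOn G S I q.1 q.2}, ?_, Or.inl hyw⟩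
  rintro ⟨a, b⟩ (hq | hq)
  · obtain ⟨hb, hbS, hab, hnext⟩ := hP _ hq
    refine ⟨hI hb, hS hbS, hab, fun z hz hbz hza => ?_⟩
    by_cases hzS' : z ∈ S'
    · exact (hnext z hzS' hbz hza).imp fun w' h => ⟨h.1, Or.inl h.2⟩
    · exact (hbdry b hbS z ⟨hz, hzS'⟩ hbz).imp fun w' h => ⟨h.1, Or.inr h.2⟩
  · obtain ⟨hb, hbS, hab, hnext⟩ := lockedOn_iff.1 hq
    exact ⟨hb, hbS, hab, fun z hz hbz hza =>
      (hnext z hz hbz hza).imp fun w' h => ⟨h.1, Or.inr h.2⟩⟩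

def NeighborsLocked (G : SimpleGraph V) (S I : Set V) (x : V) : Prop :=
  ∀ y ∈ S, G.Adj x y → ∃ w, w ≠ x ∧ LockedOn G S I y w

lemma NeighborsLocked.mono (h : NeighborsLocked G S' I' x) (hx : x ∈ S')
    (hS : S' ⊆ S) (hI : I' ⊆ I)
    (hbdry : ∀ t ∈ S', ∀ z ∈ S \ S', G.Adj t z → ∃ w', w' ≠ t ∧ LockedOn G S I z w') :
    NeighborsLocked G S I x := by
  intro y hy hxy
  by_cases hyS' : y ∈ S'
  · exact (h y hyS' hxy).imp fun w hw => ⟨hw.1, hw.2.mono hS hI hbdry⟩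
  · exact hbdry x hx y ⟨hy, hyS'⟩ hxy

lemma NeighborsLocked.rigidOn (h : NeighborsLocked G S I x) (hx : x ∈ I) (hIS : I ⊆ S) :
    RigidOn G S I x := by
  -- tokens reachable from `x` through locks; each of them has its neighbours blocked by others
  set T := {w | ReflTransGen (fun t w => ∃ y, G.Adj t y ∧ w ≠ t ∧ LockedOn G S I y w) x w}
  rw [rigidOn_iff hIS]
  refine fun J hJ => ReconfOn.subset_of_blocking hJ (T := T) ?_ ?_ ReflTransGen.refl
  · intro w hw
    rcases hw.cases_tail with rfl | ⟨t, -, y, -, -, hyw⟩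
    · exact hx
    · exact (lockedOn_iff.1 hyw).1
  · intro t ht z hz htz
    have hchild : ∀ w, w ≠ t → LockedOn G S I z w → ∃ t' ∈ T, t' ≠ t ∧ G.Adj z t' :=
      fun w hwt hzw => ⟨w, ht.tail ⟨z, htz, hwt, hzw⟩, hwt, (lockedOn_iff.1 hzw).2.2.1⟩
    rcases ht.cases_tail with rfl | ⟨t₀, ht₀, y, ht₀y, htt₀, hyt⟩
    · obtain ⟨w, hwt, hzw⟩ := h z hz htz
      exact hchild w hwt hzw
    · by_cases hzy : z = y
      · exact ⟨t₀, ht₀, htt₀.symm, hzy ▸ ht₀y.symm⟩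
      · obtain ⟨w, hwt, hzw⟩ := (lockedOn_iff.1 hyt).2.2.2 z hz htz hzy
        exact hchild w hwt hzw

lemma rigidOn_of_lockedOn_of_lockedOn {w₁ w₂ : V} (h₁ : LockedOn G S I p w₁)
    (h₂ : LockedOn G S I p w₂) (hne : w₁ ≠ w₂) (hIS : I ⊆ S) : RigidOn G S I w₁ := by
  obtain ⟨hw₁, -, -, hnext⟩ := lockedOn_iff.1 h₁
  refine NeighborsLocked.rigidOn (fun z hz hw₁z => ?_) hw₁ hIS
  by_cases hzp : z = p
  · exact ⟨w₂, hne.symm, hzp ▸ h₂⟩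
  · exact hnext z hz hw₁z hzp

/-- The branch behind `pw` touches the rest only through the empty vertex `p`. -/
lemma reconfOn_of_reconfOn_subtreeSide (hT : G.IsTree) (hpw : G.Adj p w) (hJ : IndepSet G J)
    (hJR : J ⊆ R) (hpJ : p ∉ J)
    (hK : ReconfOn G (SubtreeSide G p w ∩ R) (J ∩ SubtreeSide G p w) K) :
    ReconfOn G R J (J \ SubtreeSide G p w ∪ K) := by
  have hlift := ReconfOn.union_left (F := J \ SubtreeSide G p w) hK
    (fun t ht => ⟨ht.2, hJR ht.1⟩) Set.inter_subset_right (Set.sdiff_subset.trans hJR)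
    (fun s hs t ht => hJ hs.1 ht.1) (Set.disjoint_left.2 fun t ht htD => ht.2 htD.1)
    (fun f hf d hd hfd => hpJ
      ((eq_of_adj_of_mem_subtreeSide_of_notMem hT hpw hd.1 hf.2 hfd.symm).2 ▸ hf.1))
  rwa [Set.sdiff_union_inter] at hlift

/-- The branches behind distinct neighbours of `p` are disjoint, so the escapes can be performed
one after the other. -/
lemma exists_reconfOn_vacate (hT : G.IsTree) (W : Finset V) (hW : ∀ w ∈ W, G.Adj p w)
    (hA : IndepSet G A) (hAR : A ⊆ R) (hpA : p ∉ A)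
    (hesc : ∀ w ∈ W, ∃ K, ReconfOn G (SubtreeSide G p w ∩ R) (A ∩ SubtreeSide G p w) K ∧ w ∉ K) :
    ∃ J, ReconfOn G R A J ∧ (∀ w ∈ W, w ∉ J) ∧
      ∀ t, (∀ w ∈ W, t ∉ SubtreeSide G p w) → (t ∈ J ↔ t ∈ A) := by
  classical
  induction W using Finset.induction_on with
  | empty => exact ⟨A, .refl, by simp, fun _ _ => Iff.rfl⟩
  | @insert w₀ W hw₀ ih =>
    simp only [Finset.mem_insert, forall_eq_or_imp] at hW hesc ⊢
    obtain ⟨J, hAJ, hJW, hJA⟩ := ih hW.2 hesc.2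
    obtain ⟨K, hK, hw₀K⟩ := hesc.1
    set D := SubtreeSide G p w₀
    have hDW : ∀ t ∈ D, ∀ w ∈ W, t ∉ SubtreeSide G p w := fun t ht w hw htw =>
      Set.disjoint_left.1 (disjoint_subtreeSide hT hW.1 (hW.2 w hw) (by rintro rfl; exact hw₀ hw))
        ht htw
    have hJD : J ∩ D = A ∩ D := by
      ext t
      exact ⟨fun ⟨ht, htD⟩ => ⟨(hJA t (hDW t htD)).1 ht, htD⟩,
        fun ⟨ht, htD⟩ => ⟨(hJA t (hDW t htD)).2 ht, htD⟩⟩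
    have hKD : K ⊆ D ∩ R := ReconfOn.subset hK fun t ht => ⟨ht.2, hAR ht.1⟩
    have hJK := reconfOn_of_reconfOn_subtreeSide hT hW.1 (ReconfOn.indepSet hAJ hA)
      (ReconfOn.subset hAJ hAR) (fun hp => hpA ((hJA p fun _ _ => base_notMem_subtreeSide).1 hp))
      (hJD ▸ hK)
    refine ⟨J \ D ∪ K, hAJ.trans hJK, ⟨?_, fun w hw => ?_⟩, fun t ht => ?_⟩
    · rintro (hw₀J | hw₀K')
      · exact hw₀J.2 (self_mem_subtreeSide hW.1)
      · exact hw₀K hw₀K'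
    · rintro (hwJ | hwK)
      · exact hJW w hw hwJ.1
      · exact hDW w (hKD hwK).1 w hw (self_mem_subtreeSide (hW.2 w hw))
    · have htK : t ∉ K := fun htK => ht.1 (hKD htK).1
      simp only [Set.mem_union, Set.mem_sdiff, htK, or_false]
      exact ⟨fun h => (hJA t ht.2).1 h.1, fun h => ⟨(hJA t ht.2).2 h, ht.1⟩⟩

/-- Once every other token next to `p` has escaped into its own branch, the token on `m`
slides onto `p`. -/
lemma exists_reconfOn_slide [Finite V] (hT : G.IsTree) (hA : IndepSet G A) (hAR : A ⊆ R)
    (hpR : p ∈ R) (hpA : p ∉ A) (hm : m ∈ A) (hpm : G.Adj p m)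
    (hesc : ∀ w ∈ A, G.Adj p w → w ≠ m →
      ∃ K, ReconfOn G (SubtreeSide G p w ∩ R) (A ∩ SubtreeSide G p w) K ∧ w ∉ K) :
    ∃ J, ReconfOn G R A J ∧ p ∈ J ∧ m ∉ J := by
  set W := (Set.toFinite {w | w ∈ A ∧ G.Adj p w ∧ w ≠ m}).toFinset
  have hWmem : ∀ w, w ∈ W ↔ w ∈ A ∧ G.Adj p w ∧ w ≠ m := fun w => Set.Finite.mem_toFinset _
  obtain ⟨J, hAJ, hJW, hJA⟩ := exists_reconfOn_vacate hT W (fun w hw => ((hWmem w).1 hw).2.1)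
    hA hAR hpA fun w hw => hesc w ((hWmem w).1 hw).1 ((hWmem w).1 hw).2.1 ((hWmem w).1 hw).2.2
  have houtside : ∀ t, G.Adj p t → t ∉ W → ∀ w ∈ W, t ∉ SubtreeSide G p w :=
    fun t hpt htW w hw htw => htW (eq_of_adj_of_mem_subtreeSide hT hpt htw ▸ hw)
  have hmW : m ∉ W := fun hmW => ((hWmem m).1 hmW).2.2 rfl
  refine ⟨insert p (J \ {m}), hAJ.tail (stepOn_insert_sdiff (ReconfOn.indepSet hAJ hA)
    (ReconfOn.subset hAJ hAR) hpR ?_ ?_ hpm.symm ?_), Set.mem_insert _ _, ?_⟩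
  · exact fun hpJ => hpA ((hJA p fun _ _ => base_notMem_subtreeSide).1 hpJ)
  · exact (hJA m (houtside m hpm hmW)).2 hm
  · intro t htJ hpt
    by_contra htm
    have htW : t ∉ W := fun htW => hJW t htW htJ
    exact htW ((hWmem t).2 ⟨(hJA t (houtside t hpt htW)).1 htJ, hpt, htm⟩)
  · rintro (hmp | ⟨-, hmm⟩)
    · exact hpm.ne hmp.symm
    · exact hmm rfl

lemma exists_escape_of_not_lockedOn [Finite V] (hT : G.IsTree) (hI : IndepSet G I)
    (hIS : I ⊆ S) (hw : w ∈ I) (hyw : G.Adj y w) (hlock : ¬ LockedOn G S I y w) :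
    ∃ K, ReconfOn G (SubtreeSide G y w ∩ S) (I ∩ SubtreeSide G y w) K ∧ w ∉ K := by
  induction hn : (SubtreeSide G y w ∩ S).ncard using Nat.strong_induction_on
    generalizing y w with
  | _ n ih =>
  -- Some neighbour `z ≠ y` of `w` sees no locked token but `w`: the tokens next to `z` escape
  -- into their smaller branches, and then `w` slides onto `z`.
  obtain ⟨z, hzS, hwz, hzy, hfree⟩ : ∃ z ∈ S, G.Adj w z ∧ z ≠ y ∧
      ∀ w', w' ≠ w → ¬ LockedOn G S I z w' := by
    by_contra! h
    exact hlock (lockedOn_iff.2 ⟨hw, hIS hw, hyw, h⟩)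
  refine (exists_reconfOn_slide (A := I ∩ SubtreeSide G y w) (R := SubtreeSide G y w ∩ S) hT
    (fun s hs t ht => hI hs.1 ht.1) (fun t ht => ⟨ht.2, hIS ht.1⟩)
    ⟨mem_subtreeSide_of_adj hT hyw hwz hzy, hzS⟩ (fun hz => hI hw hz.1 hwz)
    ⟨hw, self_mem_subtreeSide hyw⟩ hwz.symm fun w' hw' hzw' hw'w => ?_).imp
    fun J hJ => ⟨hJ.1, hJ.2.2⟩
  have hsub := subtreeSide_subset_subtreeSide hT hyw hwz hzy hzw' hw'w
  have hlt : (SubtreeSide G z w' ∩ S).ncard < n := hn ▸ Set.ncard_lt_ncard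
    ⟨Set.inter_subset_inter_left S hsub, fun h =>
      Set.disjoint_left.1 (disjoint_subtreeSide hT hwz.symm hzw' hw'w.symm)
        (self_mem_subtreeSide hwz.symm) (h ⟨self_mem_subtreeSide hyw, hIS hw⟩).1⟩
    (Set.toFinite _)
  rw [← Set.inter_assoc, Set.inter_eq_left.2 hsub, Set.inter_assoc, Set.inter_eq_right.2 hsub]
  exact ih _ hlt hw'.1 hzw' (hfree w' hw'w) rfl

lemma exists_reconfOn_slide_of_not_lockedOn [Finite V] (hT : G.IsTree) (hI : IndepSet G I)
    (hIS : I ⊆ S) (hpS : p ∈ S) (hpI : p ∉ I) (hm : m ∈ I) (hpm : G.Adj p m)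
    (hfree : ∀ w ∈ I, G.Adj p w → w ≠ m → ¬ LockedOn G S I p w) :
    ∃ J, ReconfOn G S I J ∧ p ∈ J ∧ m ∉ J :=
  exists_reconfOn_slide hT hI hIS hpS hpI hm hpm fun w hw hpw hwm =>
    exists_escape_of_not_lockedOn hT hI hIS hw hpw (hfree w hw hpw hwm)

lemma rigidOn_iff_neighborsLocked [Finite V] (hT : G.IsTree) (hI : IndepSet G I) (hIS : I ⊆ S)
    (hx : x ∈ I) : RigidOn G S I x ↔ NeighborsLocked G S I x := by
  refine ⟨fun hrigid y hy hxy => ?_, fun h => h.rigidOn hx hIS⟩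
  by_contra! hfree
  obtain ⟨J, hJ, -, hxJ⟩ := exists_reconfOn_slide_of_not_lockedOn hT hI hIS hy
    (fun hyI => hI hx hyI hxy) hx hxy.symm fun w _ _ hwx => hfree w hwx
  exact hxJ ((rigidOn_iff hIS).1 hrigid J hJ)

/-- At most one token next to `p` is locked behind `p`, since two such tokens would be rigid;
that token, or else any token next to `p`, can slide onto `p`. -/
lemma exists_reconfOn_mem_of_adj [Finite V] (hT : G.IsTree) (hI : IndepSet G I) (hIS : I ⊆ S)
    (hmov : AllMovable G S I) (hpS : p ∈ S) (hpI : p ∉ I) (hx : x ∈ I) (hpx : G.Adj p x) :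
    ∃ J, ReconfOn G S I J ∧ p ∈ J := by
  by_cases hlocked : ∃ m ∈ I, G.Adj p m ∧ LockedOn G S I p m
  · obtain ⟨m, hm, hpm, hlock⟩ := hlocked
    obtain ⟨J, hJ, hpJ, -⟩ := exists_reconfOn_slide_of_not_lockedOn hT hI hIS hpS hpI hm hpm
      fun w hw _ hwm hlock' => hmov w hw (rigidOn_of_lockedOn_of_lockedOn hlock' hlock hwm hIS)
    exact ⟨J, hJ, hpJ⟩
  · push Not at hlocked
    obtain ⟨J, hJ, hpJ, -⟩ := exists_reconfOn_slide_of_not_lockedOn hT hI hIS hpS hpI hx hpx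
      fun w hw hpw _ => hlocked w hw hpw
    exact ⟨J, hJ, hpJ⟩

lemma exists_reconfOn_mem [Finite V] (hT : G.IsTree) (hS : GeodesicallyConvex G S)
    (hI : IndepSet G I) (hIS : I ⊆ S) (hmov : AllMovable G S I) (hx : x ∈ I) (hv : v ∈ S) :
    ∃ J, ReconfOn G S I J ∧ v ∈ J := by
  induction hn : G.dist v x using Nat.strong_induction_on generalizing I x with
  | _ n ih =>
  by_cases hvx : v = x
  · exact ⟨I, .refl, hvx ▸ hx⟩
  obtain ⟨p, hxp, hp⟩ := exists_adj_dist_add_one_eq hT.connected hvx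
  have hpS : p ∈ S := hS.mem_of_adj hv (hIS hx) hxp hp
  by_cases hpI : p ∈ I
  · exact ih _ (by omega) hI hIS hmov hpI rfl
  obtain ⟨J, hIJ, hpJ⟩ := exists_reconfOn_mem_of_adj hT hI hIS hmov hpS hpI hx hxp.symm
  obtain ⟨K, hJK, hvK⟩ := ih _ (by omega) (ReconfOn.indepSet hIJ hI) (ReconfOn.subset hIJ hIS)
    (allMovable_of_reconfOn hIJ hI hIS hmov) hpJ rfl
  exact ⟨K, hIJ.trans hJK, hvK⟩

def IsPendantStar (G : SimpleGraph V) (S : Set V) (u q : V) : Prop :=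
  u ∈ S ∧ G.Adj u q ∧ ∀ s ∈ S, G.Adj u s → s ≠ q → ∀ t ∈ S, G.Adj s t → t = u

/-- Take `v` farthest from `a`, and `v, u, q` the first vertices of the geodesic from `v`
to `a`. -/
lemma exists_isPendantStar [Finite V] (hT : G.IsTree) (hS : GeodesicallyConvex G S) (ha : a ∈ S)
    (hb : b ∈ S) (hab : 2 ≤ G.dist a b) :
    ∃ v u q, v ∈ S ∧ G.Adj v u ∧ v ≠ q ∧ IsPendantStar G S u q := by
  obtain ⟨v, hvS, hmax⟩ := Set.exists_max_image S (G.dist a) (Set.toFinite S) ⟨a, ha⟩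
  have hbv := hmax b hb
  have hav : a ≠ v := by rintro rfl; rw [dist_self] at hbv; omega
  obtain ⟨u, hvu, hu⟩ := exists_adj_dist_add_one_eq hT.connected hav
  have hau : a ≠ u := by rintro rfl; rw [dist_self] at hu; omega
  obtain ⟨q, huq, hq⟩ := exists_adj_dist_add_one_eq hT.connected hau
  refine ⟨v, u, q, hvS, hvu, by rintro rfl; omega, hS.mem_of_adj ha hvS hvu hu, huq,
    fun s hs hus hsq t ht hst => ?_⟩
  have hsu : G.dist a u + 1 = G.dist a s := by
    rcases hT.dist_eq_dist_add_one_of_adj a hus with h | h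
    · exact absurd (eq_of_adj_of_dist_add_one_eq hT hus.symm huq.symm h.symm hq) hsq
    · exact h.symm
  have hts : G.dist a t + 1 = G.dist a s := by
    have := hmax t ht
    have := hT.dist_eq_dist_add_one_of_adj a hst
    omega
  exact eq_of_adj_of_dist_add_one_eq hT hst.symm hus hts hsu

lemma IsPendantStar.lockedOn (h : IsPendantStar G S u q) (hsI : s ∈ I) (hsS : s ∈ S)
    (hus : G.Adj u s) (hsq : s ≠ q) : LockedOn G S I u s :=
  lockedOn_iff.2 ⟨hsI, hsS, hus, fun z hz hsz hzu => absurd (h.2.2 s hsS hus hsq z hz hsz) hzu⟩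

lemma IsPendantStar.eq_or_adj_of_notMem (hT : G.IsTree) (hS : GeodesicallyConvex G S)
    (h : IsPendantStar G S u q) (ht : t ∈ S) (htq : t ∉ SubtreeSide G u q) :
    t = u ∨ G.Adj u t ∧ t ≠ q := by
  by_cases htu : t = u
  · exact Or.inl htu
  obtain ⟨c, huc, hc⟩ := exists_adj_dist_add_one_eq hT.connected htu
  have hcS := hS.mem_of_adj ht h.1 huc hc
  have hcq : c ≠ q := by
    rintro rfl
    exact htq ((mem_subtreeSide_iff hT h.2.1).2 hc)
  by_cases htc : t = c
  · exact Or.inr (htc ▸ ⟨huc, hcq⟩)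
  obtain ⟨c', hcc', hc'⟩ := exists_adj_dist_add_one_eq hT.connected htc
  obtain rfl := h.2.2 c hcS huc hcq c' (hS.mem_of_adj ht hcS hcc' hc') hcc'
  omega

/-- A second token on a leaf at `u` would make both rigid. -/
lemma sdiff_subset_of_isPendantStar (hT : G.IsTree) (hS : GeodesicallyConvex G S)
    (hstar : IsPendantStar G S u q) (hvu : G.Adj v u) (hvq : v ≠ q) (hI : IndepSet G I)
    (hIS : I ⊆ S) (hvI : v ∈ I) (hmov : AllMovable G S I) : I \ {v} ⊆ SubtreeSide G u q ∩ S := by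
  rintro t ⟨htI, htv⟩
  refine ⟨by_contra fun htq => ?_, hIS htI⟩
  rcases hstar.eq_or_adj_of_notMem hT hS (hIS htI) htq with rfl | ⟨hut, htq'⟩
  · exact hI hvI htI hvu
  · exact hmov v hvI (rigidOn_of_lockedOn_of_lockedOn (hstar.lockedOn hvI (hIS hvI) hvu.symm hvq)
      (hstar.lockedOn htI (hIS htI) hut htq') (Ne.symm htv) hIS)

/-- A token rigid inside the branch behind `uq` would stay rigid in `S`, the token on `v`
blocking `u`. -/
lemma allMovable_sdiff_of_isPendantStar [Finite V] (hT : G.IsTree)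
    (hS : GeodesicallyConvex G S) (hstar : IsPendantStar G S u q) (hvu : G.Adj v u) (hvq : v ≠ q)
    (hI : IndepSet G I) (hIS : I ⊆ S) (hvI : v ∈ I) (hmov : AllMovable G S I) :
    AllMovable G (SubtreeSide G u q ∩ S) (I \ {v}) := by
  have hsub := sdiff_subset_of_isPendantStar hT hS hstar hvu hvq hI hIS hvI hmov
  intro x hx hrigid
  rw [rigidOn_iff_neighborsLocked hT (fun s hs t ht => hI hs.1 ht.1) hsub hx] at hrigid
  refine hmov x hx.1 (NeighborsLocked.rigidOn ?_ hx.1 hIS)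
  refine hrigid.mono (hsub hx) Set.inter_subset_right Set.sdiff_subset fun t ht z hz htz => ?_
  obtain ⟨rfl, rfl⟩ := eq_of_adj_of_mem_subtreeSide_of_notMem hT hstar.2.1 ht.1
    (fun hzq => hz.2 ⟨hzq, hz.1⟩) htz
  exact ⟨v, hvq, hstar.lockedOn hvI (hIS hvI) hvu.symm hvq⟩

lemma reconfOn_insert_of_isPendantStar (hT : G.IsTree) (hstar : IsPendantStar G S u q)
    (hvS : v ∈ S) (hvu : G.Adj v u) (hvq : v ≠ q) (hAB : ReconfOn G (SubtreeSide G u q ∩ S) A B)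
    (hA : A ⊆ SubtreeSide G u q ∩ S) : ReconfOn G S (insert v A) (insert v B) := by
  have hv : v ∉ SubtreeSide G u q := Set.disjoint_left.1
    (disjoint_subtreeSide hT hvu.symm hstar.2.1 hvq) (self_mem_subtreeSide hvu.symm)
  simpa only [Set.singleton_union] using ReconfOn.union_left (F := {v}) hAB hA
    Set.inter_subset_right (Set.singleton_subset_iff.2 hvS)
    (by rintro s rfl t rfl hst; exact G.irrefl hst)
    (Set.disjoint_singleton_left.2 fun h => hv h.1)
    (by
      rintro f rfl d hd hfd
      obtain rfl := hstar.2.2 f hvS hvu.symm hvq d hd.2 hfd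
      exact base_notMem_subtreeSide hd.1)

lemma exists_reconfOn_sdiff_of_isPendantStar [Finite V] (hT : G.IsTree)
    (hS : GeodesicallyConvex G S) (hstar : IsPendantStar G S u q) (hvS : v ∈ S) (hvu : G.Adj v u)
    (hvq : v ≠ q) (hI : IndepSet G I) (hIS : I ⊆ S) (hmov : AllMovable G S I) (hx : x ∈ I) :
    ∃ J, ReconfOn G S I J ∧ v ∈ J ∧ IndepSet G (J \ {v}) ∧ J \ {v} ⊆ SubtreeSide G u q ∩ S ∧
      AllMovable G (SubtreeSide G u q ∩ S) (J \ {v}) ∧ (J \ {v}).ncard + 1 = I.ncard := by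
  obtain ⟨J, hIJ, hvJ⟩ := exists_reconfOn_mem hT hS hI hIS hmov hx hvS
  have hJ := ReconfOn.indepSet hIJ hI
  have hJS := ReconfOn.subset hIJ hIS
  have hmovJ := allMovable_of_reconfOn hIJ hI hIS hmov
  have hpos : 0 < J.ncard := (Set.ncard_pos).2 ⟨v, hvJ⟩
  refine ⟨J, hIJ, hvJ, fun s hs t ht => hJ hs.1 ht.1,
    sdiff_subset_of_isPendantStar hT hS hstar hvu hvq hJ hJS hvJ hmovJ,
    allMovable_sdiff_of_isPendantStar hT hS hstar hvu hvq hJ hJS hvJ hmovJ, ?_⟩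
  rw [Set.ncard_sdiff_singleton_of_mem hvJ, ReconfOn.ncard_eq hIJ]
  omega

lemma reconfOn_of_ncard_le_one [Finite V] (hT : G.IsTree) (hS : GeodesicallyConvex G S)
    (hI : IndepSet G I) (hIS : I ⊆ S) (hJS : J ⊆ S) (hcard : I.ncard = J.ncard)
    (hmov : AllMovable G S I) (hone : I.ncard ≤ 1) : ReconfOn G S I J := by
  rcases I.eq_empty_or_nonempty with rfl | ⟨x, hx⟩
  · rw [Set.ncard_empty, eq_comm, Set.ncard_eq_zero] at hcard
    exact hcard ▸ .refl
  obtain ⟨y, hy⟩ := Set.nonempty_of_ncard_ne_zero (hcard ▸ (Set.ncard_pos).2 ⟨x, hx⟩).ne'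
  obtain ⟨K, hIK, hyK⟩ := exists_reconfOn_mem hT hS hI hIS hmov hx (hJS hy)
  have hK : K.ncard ≤ 1 := ReconfOn.ncard_eq hIK ▸ hone
  have hKJ : K ⊆ J := fun t ht => (Set.ncard_le_one (Set.toFinite K)).1 hK y hyK t ht ▸ hy
  rwa [Set.eq_of_subset_of_ncard_le hKJ (by rw [← ReconfOn.ncard_eq hIK, hcard])] at hIK

theorem reconfOn_of_allMovable [Finite V] (hT : G.IsTree) (hS : GeodesicallyConvex G S)
    (hI : IndepSet G I) (hJ : IndepSet G J) (hIS : I ⊆ S) (hJS : J ⊆ S)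
    (hcard : I.ncard = J.ncard) (hmovI : AllMovable G S I) (hmovJ : AllMovable G S J) :
    ReconfOn G S I J := by
  induction hn : I.ncard using Nat.strong_induction_on generalizing S I J with
  | _ n ih =>
  rcases Nat.lt_or_ge n 2 with hn2 | hn2
  · exact reconfOn_of_ncard_le_one hT hS hI hIS hJS hcard hmovI (by omega)
  obtain ⟨x₁, x₂, hx₁, hx₂, hx₁₂⟩ := (Set.one_lt_ncard_iff).1 (hn ▸ hn2 : 1 < I.ncard)
  have hdist : 2 ≤ G.dist x₁ x₂ := by
    have h0 : G.dist x₁ x₂ ≠ 0 := fun h => hx₁₂ (hT.connected.dist_eq_zero_iff.1 h)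
    have h1 : G.dist x₁ x₂ ≠ 1 := fun h => hI hx₁ hx₂ (dist_eq_one_iff_adj.1 h)
    omega
  obtain ⟨v, u, q, hvS, hvu, hvq, hstar⟩ := exists_isPendantStar hT hS (hIS hx₁) (hIS hx₂) hdist
  obtain ⟨y, hy⟩ := Set.nonempty_of_ncard_ne_zero (by omega : J.ncard ≠ 0)
  obtain ⟨I', hII', hvI', hI', hI'S, hmovI', hcardI⟩ :=
    exists_reconfOn_sdiff_of_isPendantStar hT hS hstar hvS hvu hvq hI hIS hmovI hx₁
  obtain ⟨J', hJJ', hvJ', hJ', hJ'S, hmovJ', hcardJ⟩ :=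
    exists_reconfOn_sdiff_of_isPendantStar hT hS hstar hvS hvu hvq hJ hJS hmovJ hy
  have hrest := ih _ (by omega) ((geodesicallyConvex_subtreeSide hT hstar.2.1).inter hS)
    hI' hJ' hI'S hJ'S (by omega) hmovI' hmovJ' rfl
  have hlift := reconfOn_insert_of_isPendantStar hT hstar hvS hvu hvq hrest hI'S
  rw [Set.insert_sdiff_singleton, Set.insert_sdiff_singleton, Set.insert_eq_of_mem hvI',
    Set.insert_eq_of_mem hvJ'] at hlift
  exact hII'.trans (hlift.trans (ReconfOn.symm hJJ' hJ hJS))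

end TokenSliding

theorem reconf_iff_card_eq_of_all_movable {V : Type*} [Fintype V] (G : SimpleGraph V)
    (hT : G.IsTree) (Ib Ir : Set V) (hIb : IndepSet G Ib) (hIr : IndepSet G Ir)
    (hmovb : ∀ u ∈ Ib, ¬ Rigid G Ib u) (hmovr : ∀ u ∈ Ir, ¬ Rigid G Ir u) :
    Reconf G Ib Ir ↔ Ib.ncard = Ir.ncard := by
  refine ⟨TokenSliding.Reconf.ncard_eq, fun hcard => ?_⟩
  exact TokenSliding.reconfOn_univ_iff.1 <| TokenSliding.reconfOn_of_allMovable hT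
    TokenSliding.geodesicallyConvex_univ hIb hIr (Set.subset_univ _) (Set.subset_univ _) hcard
    (TokenSliding.allMovable_univ_iff.2 hmovb) (TokenSliding.allMovable_univ_iff.2 hmovr)
end

section
/- For every positive integer k, consider the path P with vertices v_1,…,v_{8k}, I_b = {v_1, v_3, …, v_{2k-1}} and I_r = {v_{6k+2}, v_{6k+4}, …, v_{8k}}. Then I_b ⇝ I_r under token sliding, and every reconfiguration sequence from I_b to I_r has length Ω(k²). -/
/-!
The tokens can be moved one at a time, rightmost first, each sliding along the stretch of the
path between the tokens still at the start and those already at the target.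

For the lower bound, a slide changes the sum of the token positions by one, while the sums of
the two configurations differ by `k (6k + 1) ≥ k²`.
-/

section Reconfiguration

variable {V : Type*} {G : SimpleGraph V} {S : Set V} {u v : V}

theorem IndepSet.insert (hS : IndepSet G S) (hv : ∀ s ∈ S, ¬ G.Adj v s) :
    IndepSet G (insert v S) := by
  rintro a (rfl | ha) b (rfl | hb) hab
  · exact G.irrefl hab
  · exact hv _ hb hab
  · exact hv _ ha hab.symm
  · exact hS ha hb hab

theorem step_insert_of_adj (hu : u ∉ S) (hv : v ∉ S) (huv : G.Adj u v)
    (hind : IndepSet G (insert v S)) : Step G (insert u S) (insert v S) := by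
  have hne := huv.ne
  refine ⟨hind, u, v, huv, ?_, ?_⟩ <;> ext x <;> aesop

end Reconfiguration

open SimpleGraph

theorem reconf_pathGraph_insert {n : ℕ} {S : Set (Fin n)} (hS : IndepSet (pathGraph n) S)
    {p q : Fin n} (hpq : p ≤ q) (hfar : ∀ s ∈ S, (s : ℕ) + 1 < p ∨ (q : ℕ) + 1 < s) :
    Reconf (pathGraph n) (insert p S) (insert q S) := by
  suffices h : ∀ d (hd : (p : ℕ) + d ≤ q),
      Reconf (pathGraph n) (insert p S) (insert ⟨p + d, by omega⟩ S) by
    simpa [Nat.add_sub_cancel' (Fin.le_def.mp hpq)] using h (q - p) (by omega)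
  intro d
  induction d with
  | zero => exact fun _ => Relation.ReflTransGen.refl
  | succ d ih =>
    intro hd
    refine (ih (by omega)).tail (step_insert_of_adj ?_ ?_ (pathGraph_adj.mpr (.inl rfl))
      (hS.insert fun s hs hadj => ?_))
    iterate 2 exact fun hs => by have := hfar _ hs; simp only at this; omega
    · have := hfar s hs; rw [pathGraph_adj, Fin.val_mk] at hadj; omega

def partialConfig (k i : ℕ) : Set (Fin (8 * k)) :=
  {x | (x : ℕ) < 2 * i ∧ (x : ℕ) % 2 = 0 ∨ 6 * k + 1 + 2 * i ≤ x ∧ (x : ℕ) % 2 = 1}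

theorem setOf_start_eq_partialConfig (k : ℕ) :
    {x : Fin (8 * k) | ∃ j < k, (x : ℕ) = 2 * j} = partialConfig k k := by
  ext x
  simp only [partialConfig, Set.mem_ofPred_eq]
  constructor
  · rintro ⟨j, hj, hx⟩; omega
  · intro hx; exact ⟨x / 2, by omega, by omega⟩

theorem setOf_target_eq_partialConfig (k : ℕ) :
    {x : Fin (8 * k) | ∃ j < k, (x : ℕ) = 6 * k + 1 + 2 * j} = partialConfig k 0 := by
  ext x
  simp only [partialConfig, Set.mem_ofPred_eq]
  constructor
  · rintro ⟨j, hj, hx⟩; omega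
  · intro hx; exact ⟨(x - (6 * k + 1)) / 2, by omega, by omega⟩

theorem reconf_partialConfig_succ {k i : ℕ} (hi : i < k) :
    Reconf (pathGraph (8 * k)) (partialConfig k (i + 1)) (partialConfig k i) := by
  let S : Set (Fin (8 * k)) :=
    {x | (x : ℕ) < 2 * i ∧ (x : ℕ) % 2 = 0 ∨ 6 * k + 3 + 2 * i ≤ x ∧ (x : ℕ) % 2 = 1}
  have hstart : partialConfig k (i + 1) = insert ⟨2 * i, by omega⟩ S := by
    ext x; simp only [partialConfig, S, Set.mem_ofPred_eq, Set.mem_insert_iff, Fin.ext_iff]; omega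
  have htarget : partialConfig k i = insert ⟨6 * k + 1 + 2 * i, by omega⟩ S := by
    ext x; simp only [partialConfig, S, Set.mem_ofPred_eq, Set.mem_insert_iff, Fin.ext_iff]; omega
  have hS : IndepSet (pathGraph (8 * k)) S := by
    intro x hx y hy hxy
    simp only [S, Set.mem_ofPred_eq] at hx hy
    rw [pathGraph_adj] at hxy
    omega
  rw [hstart, htarget]
  exact reconf_pathGraph_insert hS (Fin.mk_le_mk.mpr (by omega)) fun s hs => by
    simp only [S, Set.mem_ofPred_eq] at hs; simp only; omega

theorem reconf_partialConfig_zero {k i : ℕ} (hi : i ≤ k) :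
    Reconf (pathGraph (8 * k)) (partialConfig k i) (partialConfig k 0) := by
  induction i with
  | zero => exact Relation.ReflTransGen.refl
  | succ i ih => exact (reconf_partialConfig_succ hi).trans (ih (by omega))

theorem finsum_mem_add_eq_of_sdiff_eq_singleton {α M : Type*} [AddCommMonoid M]
    {s t : Set α} (hs : s.Finite) (ht : t.Finite) {a b : α}
    (hst : s \ t = {a}) (hts : t \ s = {b}) (f : α → M) :
    ∑ᶠ x ∈ t, f x + f a = ∑ᶠ x ∈ s, f x + f b := by
  rw [← finsum_mem_inter_add_sdiff s ht, ← finsum_mem_inter_add_sdiff t hs, hst, hts,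
    finsum_mem_singleton, finsum_mem_singleton, Set.inter_comm, add_right_comm]

noncomputable def positionSum {n : ℕ} (A : Set (Fin n)) : ℕ :=
  ∑ᶠ x ∈ A, (x : ℕ)

theorem positionSum_le_of_step {n : ℕ} {A B : Set (Fin n)} (h : Step (pathGraph n) A B) :
    positionSum B ≤ positionSum A + 1 := by
  obtain ⟨-, u, v, huv, hAB, hBA⟩ := h
  have := finsum_mem_add_eq_of_sdiff_eq_singleton (Set.toFinite A) (Set.toFinite B) hAB hBA
    (fun x : Fin n => (x : ℕ))
  rw [pathGraph_adj] at huv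
  unfold positionSum
  omega

theorem positionSum_setOf_exists_lt {n k : ℕ} {f : ℕ → ℕ} (hf : Function.Injective f)
    (hfn : ∀ j < k, f j < n) :
    positionSum {x : Fin n | ∃ j < k, (x : ℕ) = f j} = ∑ j ∈ Finset.range k, f j := by
  have himage : Fin.val '' {x : Fin n | ∃ j < k, (x : ℕ) = f j} = f '' Set.Iio k := by
    ext m
    constructor
    · rintro ⟨x, ⟨j, hj, hx⟩, rfl⟩; exact ⟨j, hj, hx.symm⟩
    · rintro ⟨j, hj, rfl⟩; exact ⟨⟨f j, hfn j hj⟩, ⟨j, hj, rfl⟩, rfl⟩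
  rw [positionSum, ← finsum_mem_image (f := fun m : ℕ => m) Fin.val_injective.injOn, himage,
    finsum_mem_image hf.injOn, ← Finset.coe_range, finsum_mem_coe_finset]

theorem List.IsChain.le_add_length_sub_one {α : Type*} {r : α → α → Prop} {f : α → ℕ}
    (hf : ∀ a b, r a b → f b ≤ f a + 1) :
    ∀ {L : List α}, L.IsChain r → ∀ {a b : α}, L.head? = some a → L.getLast? = some b →
      f b ≤ f a + (L.length - 1)
  | [], _, _, _, ha, _ => by simp at ha
  | [x], _, a, b, ha, hb => by simp_all
  | x :: y :: t, hL, a, b, ha, hb => by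
    rw [List.isChain_cons_cons] at hL
    have ih := le_add_length_sub_one hf hL.2 rfl (by rwa [List.getLast?_cons_cons] at hb)
    simp only [List.head?_cons, Option.some.injEq] at ha
    subst ha
    have := hf _ _ hL.1
    simp only [List.length_cons] at ih ⊢
    omega

theorem positionSum_target_eq {k : ℕ} :
    positionSum {x : Fin (8 * k) | ∃ j < k, (x : ℕ) = 6 * k + 1 + 2 * j} =
      positionSum {x : Fin (8 * k) | ∃ j < k, (x : ℕ) = 2 * j} + k * (6 * k + 1) := by
  rw [positionSum_setOf_exists_lt (fun a b h => by omega) (fun j hj => by omega),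
    positionSum_setOf_exists_lt (fun a b h => by omega) (fun j hj => by omega),
    Finset.sum_add_distrib, Finset.sum_const, Finset.card_range, smul_eq_mul, add_comm]

theorem path_quadratic_lower_bound :
    ∃ c : ℕ, 0 < c ∧ ∀ k : ℕ, 0 < k →
      Reconf (SimpleGraph.pathGraph (8 * k))
        {i : Fin (8 * k) | ∃ j < k, (i : ℕ) = 2 * j}
        {i : Fin (8 * k) | ∃ j < k, (i : ℕ) = 6 * k + 1 + 2 * j} ∧
      ∀ L : List (Set (Fin (8 * k))),
        L.Chain' (Step (SimpleGraph.pathGraph (8 * k))) →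
        L.head? = some {i : Fin (8 * k) | ∃ j < k, (i : ℕ) = 2 * j} →
        L.getLast? = some {i : Fin (8 * k) | ∃ j < k, (i : ℕ) = 6 * k + 1 + 2 * j} →
        k ^ 2 ≤ c * (L.length - 1) := by
  refine ⟨1, one_pos, fun k _ => ⟨?_, fun L hL hhead hlast => ?_⟩⟩
  · rw [setOf_start_eq_partialConfig, setOf_target_eq_partialConfig]
    exact reconf_partialConfig_zero le_rfl
  · have hlen := List.IsChain.le_add_length_sub_one (fun _ _ h => positionSum_le_of_step h)
      hL hhead hlast
    rw [positionSum_target_eq] at hlen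
    nlinarith
end

section
/- In any reconfiguration sequence from I_b to I_r under token sliding in a tree, each individual token must be slid at least the tree distance between its initial and final position; consequently, on the path v_1,…,v_{8k} with I_b = {v_1,v_3,…,v_{2k-1}} and I_r = {v_{6k+2},…,v_{8k}}, at least Σ_{i=1}^{k} (distance moved by the i-th token) ≥ k·(4k+1) slides are required. -/
open Finset

lemma SimpleGraph.Adj.dist_le_dist_add_one {V : Type*} {G : SimpleGraph V} {u v : V}
    (huv : G.Adj u v) (w : V) : G.dist u w ≤ G.dist v w + 1 := by
  rw [dist_comm, dist_comm (u := v)]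
  rcases huv.symm.diff_dist_adj (u := w) with h | h | h <;> omega

lemma Slide.exists_eq_insert_erase {V : Type*} [DecidableEq V] {G : SimpleGraph V}
    {A : Finset V} {B : Set V} (h : Slide G ↑A B) :
    ∃ u v, G.Adj u v ∧ u ∈ A ∧ v ∉ A ∧ B = ↑(insert v (A.erase u)) := by
  obtain ⟨u, v, huv, hAB, hBA⟩ := h
  have hAB' := Set.ext_iff.mp hAB
  have hBA' := Set.ext_iff.mp hBA
  simp only [Set.mem_sdiff, Finset.mem_coe, Set.mem_singleton_iff] at hAB' hBA'
  refine ⟨u, v, huv, ((hAB' u).2 rfl).1, ((hBA' v).2 rfl).2, ?_⟩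
  ext x
  simp only [coe_insert, coe_erase, Set.mem_insert_iff, Set.mem_sdiff, Finset.mem_coe,
    Set.mem_singleton_iff]
  grind

section Transport

variable {V : Type*} [DecidableEq V] {G : SimpleGraph V}

lemma exists_bijOn_sum_dist_le_of_adj {u v : V} {A C : Finset V} {f : V → V}
    (huv : G.Adj u v) (hu : u ∈ A) (hv : v ∉ A)
    (hf : Set.BijOn f ↑(insert v (A.erase u)) ↑C) :
    ∃ g : V → V, Set.BijOn g ↑A ↑C ∧
      ∑ x ∈ A, G.dist x (g x) ≤ ∑ x ∈ insert v (A.erase u), G.dist x (f x) + 1 := by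
  refine ⟨f ∘ Equiv.swap u v, hf.comp ?_, ?_⟩
  · simpa using Equiv.swap_bijOn_exchange (s := (A : Set V)) hu hv
  · have hfix : ∀ x ∈ A.erase u, Equiv.swap u v x = x := fun x hx =>
      Equiv.swap_apply_of_ne_of_ne (ne_of_mem_erase hx)
        (ne_of_mem_of_not_mem (mem_of_mem_erase hx) hv)
    rw [← add_sum_erase _ _ hu, sum_insert (fun h => hv (mem_of_mem_erase h)),
      sum_congr rfl fun x hx => by rw [Function.comp_apply, hfix x hx]]
    simp only [Function.comp_apply, Equiv.swap_apply_left]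
    have := huv.dist_le_dist_add_one (f v)
    omega

theorem exists_bijOn_sum_dist_le_length_sub_one {L : List (Set V)}
    (hL : L.IsChain (Slide G)) {A C : Finset V}
    (hA : L.head? = some ↑A) (hC : L.getLast? = some ↑C) :
    ∃ f : V → V, Set.BijOn f ↑A ↑C ∧ ∑ x ∈ A, G.dist x (f x) ≤ L.length - 1 := by
  induction L generalizing A with
  | nil => simp at hA
  | cons B L ih =>
    obtain rfl : B = ↑A := by simpa using hA
    cases L with
    | nil =>
      obtain rfl : A = C := by simpa using hC
      exact ⟨id, Set.bijOn_id _, by simp⟩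
    | cons B' L =>
      obtain ⟨hslide, hL⟩ := List.isChain_cons_cons.mp hL
      obtain ⟨u, v, huv, hu, hv, rfl⟩ := hslide.exists_eq_insert_erase
      obtain ⟨f, hf, hsum⟩ := ih hL rfl (by simpa using hC)
      obtain ⟨g, hg, hgsum⟩ := exists_bijOn_sum_dist_le_of_adj huv hu hv hf
      refine ⟨g, hg, hgsum.trans ?_⟩
      simp only [List.length_cons] at hsum ⊢
      omega

end Transport

namespace SimpleGraph

lemma Walk.val_le_val_add_length_of_pathGraph {n : ℕ} {a b : Fin n}
    (p : (pathGraph n).Walk a b) : (b : ℕ) ≤ a + p.length := by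
  induction p with
  | nil => simp
  | cons h _ ih =>
    rw [pathGraph_adj] at h
    simp only [Walk.length_cons]
    omega

lemma pathGraph_val_sub_val_le_dist {n : ℕ} (a b : Fin n) :
    (b : ℕ) - a ≤ (pathGraph n).dist a b := by
  obtain ⟨m, rfl⟩ := Nat.exists_eq_add_one_of_ne_zero a.pos.ne'
  obtain ⟨p, hp⟩ := (pathGraph_connected m a b).exists_walk_length_eq_dist
  have := p.val_le_val_add_length_of_pathGraph
  omega

end SimpleGraph

lemma ncard_setOf_val_eq_two_mul {n k : ℕ} (h : 2 * k ≤ n) :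
    {i : Fin n | ∃ j < k, (i : ℕ) = 2 * j}.ncard = k := by
  have himage : Fin.val '' {i : Fin n | ∃ j < k, (i : ℕ) = 2 * j} = (2 * ·) '' Set.Iio k := by
    ext m
    simp only [Set.mem_image, Set.mem_Iio]
    constructor
    · rintro ⟨i, ⟨j, hj, hij⟩, rfl⟩
      exact ⟨j, hj, hij.symm⟩
    · rintro ⟨j, hj, rfl⟩
      exact ⟨⟨2 * j, by omega⟩, ⟨j, hj, rfl⟩, rfl⟩
  rw [← Set.ncard_image_of_injective _ Fin.val_injective, himage,
    Set.ncard_image_of_injective _ (mul_right_injective₀ two_ne_zero), Set.ncard_Iio_nat]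

theorem token_distance_lower_bound :
    (∀ (V : Type) [Fintype V] [DecidableEq V] (G : SimpleGraph V), G.IsTree →
      ∀ Ib Ir : Finset V, IndepSet G ↑Ib → IndepSet G ↑Ir →
        ∀ L : List (Set V), L.Chain' (Step G) →
          L.head? = some ↑Ib → L.getLast? = some ↑Ir →
          ∃ f : V → V, Set.BijOn f ↑Ib ↑Ir ∧
            ∑ x ∈ Ib, G.dist x (f x) ≤ L.length - 1) ∧
    (∀ k : ℕ, 0 < k →
      ∀ L : List (Set (Fin (8 * k))),
        L.Chain' (Step (SimpleGraph.pathGraph (8 * k))) →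
        L.head? = some {i : Fin (8 * k) | ∃ j < k, (i : ℕ) = 2 * j} →
        L.getLast? = some {i : Fin (8 * k) | ∃ j < k, (i : ℕ) = 6 * k + 1 + 2 * j} →
        k * (4 * k + 1) ≤ L.length - 1) := by
  refine ⟨fun V _ _ G _ Ib Ir _ _ L hL hIb hIr =>
    exists_bijOn_sum_dist_le_length_sub_one (hL.imp fun _ _ h => h.2) hIb hIr, ?_⟩
  intro k _ L hL hIb hIr
  set Sb := {i : Fin (8 * k) | ∃ j < k, (i : ℕ) = 2 * j}
  set Sr := {i : Fin (8 * k) | ∃ j < k, (i : ℕ) = 6 * k + 1 + 2 * j}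
  set Ib := (Set.toFinite Sb).toFinset
  have hIb' : (Ib : Set (Fin (8 * k))) = Sb := Set.Finite.coe_toFinset _
  have hIr' : ((Set.toFinite Sr).toFinset : Set (Fin (8 * k))) = Sr := Set.Finite.coe_toFinset _
  obtain ⟨f, hf, hsum⟩ := exists_bijOn_sum_dist_le_length_sub_one (hL.imp fun _ _ h => h.2)
    (by rw [hIb, hIb']) (by rw [hIr, hIr'])
  rw [hIb', hIr'] at hf
  have hcard : Ib.card = k := by
    rw [← Set.ncard_eq_toFinset_card, ncard_setOf_val_eq_two_mul (by omega)]
  have hfar : ∀ x ∈ Ib, 4 * k + 1 ≤ (SimpleGraph.pathGraph (8 * k)).dist x (f x) := by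
    intro x hx
    rw [← mem_coe, hIb'] at hx
    obtain ⟨j', hj', hfxj⟩ := hf.mapsTo hx
    obtain ⟨j, hj, hxj⟩ := hx
    have := SimpleGraph.pathGraph_val_sub_val_le_dist x (f x)
    omega
  calc k * (4 * k + 1) = ∑ _x ∈ Ib, (4 * k + 1) := by rw [sum_const, hcard, smul_eq_mul]
    _ ≤ ∑ x ∈ Ib, (SimpleGraph.pathGraph (8 * k)).dist x (f x) := sum_le_sum hfar
    _ ≤ L.length - 1 := hsum
end

section
/- Let T be a tree, I an independent set of T with all tokens (T,I)-movable, v ∉ I, and let w ∈ I minimize dist(v,w) over I. If the v–w path is (v = p_0, p_1, …, p_ℓ = w) with ℓ ≥ 2, then no vertex of I lies on p_0,…,p_{ℓ-1} and no vertex of I is adjacent to any of p_0,…,p_{ℓ-2}. -/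
/-!
Every vertex `p_i` lies within distance `i` of `v`, and in a tree the path has length
`dist(v, w)`; so `p_i` with `i < ℓ`, and every neighbour of `p_i` with `i ≤ ℓ - 2`, is strictly
closer to `v` than `w` is, and cannot be in `I` by the minimality of `w`.
-/

namespace SimpleGraph

variable {V : Type*} {G : SimpleGraph V} {u v x y : V}

lemma Walk.dist_getVert_le (p : G.Walk u v) (i : ℕ) : G.dist u (p.getVert i) ≤ i :=
  (dist_le (p.take i)).trans (by simp [Walk.take_length])

lemma IsTree.length_eq_dist_of_isPath (hT : G.IsTree) {p : G.Walk u v} (hp : p.IsPath) :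
    p.length = G.dist u v := by
  obtain ⟨q, hq, hq_len⟩ := hT.connected.exists_path_of_dist u v
  rw [← hq_len, (hT.existsUnique_path u v).unique hp hq]

lemma Adj.dist_le_dist_add_one_s17 (h : G.Adj x y) (u : V) : G.dist u y ≤ G.dist u x + 1 := by
  rcases h.diff_dist_adj (u := u) with h | h | h <;> omega

end SimpleGraph

open SimpleGraph

theorem closest_token_path_empty_general {V : Type*} (G : SimpleGraph V)
    (hT : G.IsTree) (I : Set V)
    (v : V) (w : V)
    (hmin : ∀ x ∈ I, G.dist v w ≤ G.dist v x)
    (p : G.Walk v w) (hp : p.IsPath) :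
    (∀ i < p.length, p.getVert i ∉ I) ∧
    (∀ i, i + 2 ≤ p.length → ∀ x ∈ I, ¬ G.Adj (p.getVert i) x) := by
  have hlen := hT.length_eq_dist_of_isPath hp
  refine ⟨fun i hi hI => ?_, fun i hi x hx hadj => ?_⟩
  · have := p.dist_getVert_le i
    have := hmin _ hI
    omega
  · have := p.dist_getVert_le i
    have := hadj.dist_le_dist_add_one_s17 v
    have := hmin x hx
    omega

theorem closest_token_path_empty {V : Type*} [Fintype V] (G : SimpleGraph V)
    (hT : G.IsTree) (I : Set V) (hI : IndepSet G I)
    (hmov : ∀ u ∈ I, ¬ Rigid G I u)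
    (v : V) (hv : v ∉ I) (w : V) (hw : w ∈ I)
    (hmin : ∀ x ∈ I, G.dist v w ≤ G.dist v x)
    (p : G.Walk v w) (hp : p.IsPath) (hl : 2 ≤ p.length) :
    (∀ i < p.length, p.getVert i ∉ I) ∧
    (∀ i, i + 2 ≤ p.length → ∀ x ∈ I, ¬ G.Adj (p.getVert i) x) :=
  closest_token_path_empty_general G hT I v w hmin p hp
end

section
/- Let I be an independent set of a tree T that contains at least one (T,I)-movable token. Then there exists u ∈ I and a neighbor w of u such that N(w) ∩ I = {u}; in particular, the token on u can be slid to w in a single move (I \ {u}) ∪ {w} is independent. -/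
theorem Set.eq_insert_diff_of_diff_eq {α : Type*} {A B : Set α} {u v : α}
    (hAB : A \ B = {u}) (hBA : B \ A = {v}) : B = insert v (A \ {u}) := by
  ext x
  by_cases hxA : x ∈ A
  · have hx : x ∈ B ↔ x ≠ u := by
      rw [← not_iff_not, not_not, ← Set.mem_singleton_iff, ← hAB]
      simp [hxA]
    have hvA : v ∉ A := (hBA ▸ rfl : v ∈ B \ A).2
    rw [hx]
    constructor
    · exact fun hxu => Set.mem_insert_of_mem _ ⟨hxA, hxu⟩
    · rintro (rfl | ⟨-, hxu⟩)
      · exact absurd hxA hvA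
      · exact hxu
  · have hx : x ∈ B ↔ x = v := by
      rw [← Set.mem_singleton_iff, ← hBA]
      simp [hxA]
    simp [hx, hxA]

theorem neighborSet_inter_eq_singleton_of_indepSet_insert {V : Type*} {G : SimpleGraph V}
    {I : Set V} {u w : V} (hI' : IndepSet G (insert w (I \ {u}))) (huw : G.Adj u w)
    (huI : u ∈ I) : G.neighborSet w ∩ I = {u} := by
  ext x
  constructor
  · rintro ⟨hwx, hxI⟩
    by_contra hxu
    exact hI' (Set.mem_insert _ _) (Set.mem_insert_of_mem _ ⟨hxI, hxu⟩) hwx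
  · rintro rfl
    exact ⟨huw.symm, huI⟩

theorem Step.exists_immediately_slidable {V : Type*} {G : SimpleGraph V} {I K : Set V}
    (h : Step G I K) :
    ∃ u ∈ I, ∃ w : V, G.Adj u w ∧ G.neighborSet w ∩ I = {u} ∧
      IndepSet G (insert w (I \ {u})) := by
  obtain ⟨hK, u, w, huw, hIK, hKI⟩ := h
  have huI : u ∈ I := (hIK ▸ rfl : u ∈ I \ K).1
  rw [Set.eq_insert_diff_of_diff_eq hIK hKI] at hK
  exact ⟨u, huI, w, huw, neighborSet_inter_eq_singleton_of_indepSet_insert hK huw huI, hK⟩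

theorem exists_step_of_not_rigid {V : Type*} {G : SimpleGraph V} {I : Set V} {u : V}
    (huI : u ∈ I) (hu : ¬ Rigid G I u) : ∃ K, Step G I K := by
  simp only [Rigid, not_forall] at hu
  obtain ⟨J, hJ, huJ⟩ := hu
  rcases hJ.cases_head with rfl | ⟨K, hK, -⟩
  · exact absurd huI huJ
  · exact ⟨K, hK⟩

theorem exists_immediately_slidable_token_general {V : Type*} (G : SimpleGraph V)
    (I : Set V)
    (hmov : ∃ u ∈ I, ¬ Rigid G I u) :
    ∃ u ∈ I, ∃ w : V, G.Adj u w ∧ G.neighborSet w ∩ I = {u} ∧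
      IndepSet G (insert w (I \ {u})) := by
  obtain ⟨u, huI, hu⟩ := hmov
  obtain ⟨K, hK⟩ := exists_step_of_not_rigid huI hu
  exact hK.exists_immediately_slidable

theorem exists_immediately_slidable_token {V : Type*} [Fintype V] (G : SimpleGraph V)
    (hT : G.IsTree) (I : Set V) (hI : IndepSet G I)
    (hmov : ∃ u ∈ I, ¬ Rigid G I u) :
    ∃ u ∈ I, ∃ w : V, G.Adj u w ∧ G.neighborSet w ∩ I = {u} ∧
      IndepSet G (insert w (I \ {u})) :=
  exists_immediately_slidable_token_general G I hmov
end
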